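/- arXiv:1902.05876 — 5 statements merged into one kernel-verified Lean document; each statement's English description precedes it below -/
import Mathlib

section
/- (Improper upper bound, factor 2.) For every d ≥ 1, every finite class Q = {q_1, …, q_n} of Borel probability measures on ℝ^d, and every ε, δ ∈ (0,1), there exist a sample size m ∈ ℕ and a measurable map A from (ℝ^d)^m to the space of Borel probability measures on ℝ^d such that for every Borel probability measure p on ℝ^d, the m-fold product measure p^{⊗m} of the set { S ∈ (ℝ^d)^m : TV(A(S), p) ≤ 2 · min_{1 ≤ i ≤ n} TV(p, q_i) + ε } is at least 1 − δ. -/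
open MeasureTheory

/-- Total variation distance between two measures:
`TV(p,q) = sup over measurable sets A of |p(A) - q(A)|`. -/
noncomputable def tv {X : Type*} [MeasurableSpace X] (p q : Measure X) : ℝ :=
  ⨆ A : {A : Set X // MeasurableSet A}, |(p A.1).toReal - (q A.1).toReal|

open ProbabilityTheory
open scoped ENNReal NNReal

section tvlem

variable {X : Type*} [MeasurableSpace X] (p q : Measure X)
  [IsProbabilityMeasure p] [IsProbabilityMeasure q]

lemma tv_bdd : BddAbove (Set.range fun A : {A : Set X // MeasurableSet A} =>
    |(p A.1).toReal - (q A.1).toReal|) := by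
  refine ⟨2, ?_⟩
  rintro x ⟨A, rfl⟩
  have h1 : (p A.1).toReal ≤ 1 := by
    simpa using ENNReal.toReal_mono (by simp) (prob_le_one (μ := p) (s := A.1))
  have h2 : (q A.1).toReal ≤ 1 := by
    simpa using ENNReal.toReal_mono (by simp) (prob_le_one (μ := q) (s := A.1))
  have h3 : (0:ℝ) ≤ (p A.1).toReal := ENNReal.toReal_nonneg
  have h4 : (0:ℝ) ≤ (q A.1).toReal := ENNReal.toReal_nonneg
  rw [abs_sub_le_iff]; constructor <;> linarith

lemma abs_le_tv {A : Set X} (hA : MeasurableSet A) :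
    |(p A).toReal - (q A).toReal| ≤ tv p q :=
  le_ciSup (tv_bdd p q) (⟨A, hA⟩ : {A : Set X // MeasurableSet A})

lemma tv_le_of_forall {x : ℝ} (h : ∀ A : Set X, MeasurableSet A →
    |(p A).toReal - (q A).toReal| ≤ x) : tv p q ≤ x :=
  ciSup_le fun A => h A.1 A.2

lemma tv_nonneg : 0 ≤ tv p q := by
  have := abs_le_tv p q MeasurableSet.empty
  simpa using le_trans (abs_nonneg _) this

end tvlem

/-- maximum element of a total transitive relation on a finite set -/
lemma finset_exists_rel_max' {β : Type*} {R : β → β → Prop}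
    (htot : ∀ a b, R a b ∨ R b a) (htr : ∀ {a b c}, R a b → R b c → R a c)
    (s : Finset β) (hs : s.Nonempty) : ∃ m ∈ s, ∀ b ∈ s, R b m := by
  classical
  induction s using Finset.induction_on with
  | empty => exact absurd hs (by simp)
  | @insert a s ha ih =>
    by_cases hse : s.Nonempty
    · obtain ⟨m, hm, hmax⟩ := ih hse
      rcases htot a m with h | h
      · exact ⟨m, Finset.mem_insert_of_mem hm, fun b hb => by
          rcases Finset.mem_insert.1 hb with rfl | hb
          · exact h
          · exact hmax b hb⟩
      · exact ⟨a, Finset.mem_insert_self a s, fun b hb => by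
          rcases Finset.mem_insert.1 hb with rfl | hb
          · rcases htot b b with h' | h' <;> exact h'
          · exact htr (hmax b hb) h⟩
    · rw [Finset.not_nonempty_iff_eq_empty] at hse
      subst hse
      exact ⟨a, Finset.mem_insert_self a ∅, fun b hb => by
        rcases Finset.mem_insert.1 hb with rfl | hb
        · rcases htot b b with h' | h' <;> exact h'
        · simp at hb⟩

lemma ennreal_interp' {a t b : ℝ≥0∞} (hat : a < t) (htb : t ≤ b) (hb : b ≠ ⊤) :
    (b - t) / (b - a) * a + (t - a) / (b - a) * b = t := by
  have ha : a ≠ ⊤ := (lt_of_lt_of_le hat htb).trans_le (le_of_eq rfl) |>.ne_top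
  have ht : t ≠ ⊤ := (lt_of_le_of_lt htb hb.lt_top).ne
  lift b to NNReal using hb
  lift t to NNReal using ht
  lift a to NNReal using ha
  have hat' : (a:ℝ) < t := by exact_mod_cast hat
  have htb' : (t:ℝ) ≤ b := by exact_mod_cast htb
  have hab : (a:ℝ) < b := lt_of_lt_of_le hat' htb'
  have hden : ((b:ℝ≥0∞) - a) ≠ 0 := by
    rw [← ENNReal.coe_sub]
    simp only [ne_eq, ENNReal.coe_eq_zero, tsub_eq_zero_iff_le, NNReal.coe_le_coe]
    intro h
    have : (b:ℝ) ≤ a := by exact_mod_cast h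
    linarith
  rw [← ENNReal.coe_sub, ← ENNReal.coe_sub, ← ENNReal.coe_sub]
  rw [← ENNReal.coe_div (by intro h; apply hden; rw [← ENNReal.coe_sub, h]; rfl),
      ← ENNReal.coe_div (by intro h; apply hden; rw [← ENNReal.coe_sub, h]; rfl),
      ← ENNReal.coe_mul, ← ENNReal.coe_mul, ← ENNReal.coe_add, ENNReal.coe_inj]
  apply NNReal.coe_injective
  push_cast [NNReal.coe_sub (le_of_lt hat'), NNReal.coe_sub htb',
    NNReal.coe_sub (le_of_lt (lt_of_lt_of_le (show a < t by exact_mod_cast hat) (show t ≤ b by exact_mod_cast htb)))]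
  have hne : (b:ℝ) - a ≠ 0 := sub_ne_zero.mpr (ne_of_gt hab)
  field_simp
  ring



section mixsec

variable {α : Type*} [MeasurableSpace α] {n : ℕ}

/-- setwise domination of `q i` by `q j` on subsets of `B` -/
def RR (q : Fin n → Measure α) (B : Set α) (i j : Fin n) : Prop :=
  ∀ A : Set α, MeasurableSet A → A ⊆ B → q i A ≤ q j A

lemma rr_trans {q : Fin n → Measure α} {B : Set α} {i j k : Fin n}
    (h : RR q B i j) (h' : RR q B j k) : RR q B i k :=
  fun A hA hAB => (h A hA hAB).trans (h' A hA hAB)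

open Classical in
/-- the interpolating measure on an atom `B` with target mass `t` -/
noncomputable def mix (q : Fin n → Measure α) (B : Set α) (t : ℝ≥0∞) : Measure α :=
  if hU : ∃ hi, (t ≤ q hi B ∧ ∀ j, t ≤ q j B → RR q B hi j) then
    if hL : ∃ lo, (¬ RR q B hU.choose lo ∧ ∀ j, ¬ RR q B hU.choose j → RR q B j lo) then
      ((q hU.choose B - t) / (q hU.choose B - q hL.choose B)) • (q hL.choose).restrict B +
        ((t - q hL.choose B) / (q hU.choose B - q hL.choose B)) • (q hU.choose).restrict B
    else (t / q hU.choose B) • (q hU.choose).restrict B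
  else if hT : ∃ top, ∀ i, RR q B i top then (t / q hT.choose B) • (q hT.choose).restrict B
  else 0

variable {q : Fin n → Measure α} {B : Set α} {t : ℝ≥0∞}

lemma mix_inter (q : Fin n → Measure α) (B : Set α) (t : ℝ≥0∞) (hB : MeasurableSet B)
    {A : Set α} (hA : MeasurableSet A) : mix q B t A = mix q B t (A ∩ B) := by
  classical
  unfold mix
  split_ifs with h1 h2 h3 <;>
    simp [Measure.restrict_apply hA, Measure.restrict_apply (hA.inter hB),
      Set.inter_assoc]

lemma lo_lt_of_spec {hi lo : Fin n} (hspec : t ≤ q hi B ∧ ∀ j, t ≤ q j B → RR q B hi j)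
    (hlo : ¬ RR q B hi lo) : q lo B < t := by
  by_contra h
  push_neg at h
  exact hlo (hspec.2 lo h)

lemma mix_total (q : Fin n → Measure α) (B : Set α) (t : ℝ≥0∞) (hB : MeasurableSet B)
    (htot : ∀ i j, RR q B i j ∨ RR q B j i)
    (hfin : ∀ i, q i B ≠ ⊤) (hn : 0 < n) (halive : t ≠ 0 → ∃ i, q i B ≠ 0) :
    mix q B t B = t := by
  classical
  unfold mix
  split_ifs with h1 h2 h3
  · -- mixture case
    have hspec := h1.choose_spec
    have hlospec := h2.choose_spec
    set hi := h1.choose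
    set lo := h2.choose
    have hat : q lo B < t := lo_lt_of_spec hspec hlospec.1
    have htb : t ≤ q hi B := hspec.1
    simp only [Measure.add_apply, Measure.smul_apply, smul_eq_mul,
      Measure.restrict_apply hB, Set.inter_self]
    exact ennreal_interp' hat htb (hfin hi)
  · -- scale down case
    have hspec := h1.choose_spec
    set hi := h1.choose
    simp only [Measure.smul_apply, smul_eq_mul, Measure.restrict_apply hB, Set.inter_self]
    rcases eq_or_ne (q hi B) 0 with h0 | h0
    · have ht0 : t = 0 := le_antisymm (h0 ▸ hspec.1) zero_le
      simp [h0, ht0]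
    · exact ENNReal.div_mul_cancel h0 (hfin hi)
  · -- scale up case
    have htopspec := h3.choose_spec
    set top := h3.choose
    -- U is empty
    have hUe : ∀ i, q i B < t := by
      intro i
      by_contra h
      push_neg at h
      obtain ⟨m, hm, hmax⟩ := finset_exists_rel_max' (R := fun a b => RR q B b a)
        (fun a b => (htot b a)) (fun hab hbc => rr_trans hbc hab)
        (Finset.univ.filter fun j => t ≤ q j B)
        ⟨i, by simpa using h⟩
      simp only [Finset.mem_filter, Finset.mem_univ, true_and] at hm hmax
      exact h1 ⟨m, hm, fun j hj => hmax j hj⟩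
    have ht0 : t ≠ 0 := by
      intro h
      have := hUe top
      rw [h] at this
      simp at this
    obtain ⟨i0, hi0⟩ := halive ht0
    have htop0 : q top B ≠ 0 := by
      intro h
      have := htopspec i0 B hB (subset_refl B)
      rw [h] at this
      exact hi0 (le_antisymm this zero_le)
    simp only [Measure.smul_apply, smul_eq_mul, Measure.restrict_apply hB, Set.inter_self]
    exact ENNReal.div_mul_cancel htop0 (hfin top)
  · -- impossible: top always exists
    exfalso
    obtain ⟨m, hm, hmax⟩ := finset_exists_rel_max' (R := RR q B)
      htot (fun hab hbc => rr_trans hab hbc) Finset.univ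
      ⟨⟨0, hn⟩, Finset.mem_univ _⟩
    exact h3 ⟨m, fun i => hmax i (Finset.mem_univ i)⟩

lemma mix_onesided (q : Fin n → Measure α) (B : Set α) (t : ℝ≥0∞) (hB : MeasurableSet B)
    (htot : ∀ i j, RR q B i j ∨ RR q B j i)
    (hfin : ∀ i, q i B ≠ ⊤) (hn : 0 < n) (i : Fin n) :
    (∀ A, MeasurableSet A → mix q B t A ≤ q i (A ∩ B)) ∨
    (∀ A, MeasurableSet A → q i (A ∩ B) ≤ mix q B t A) := by
  classical
  unfold mix
  split_ifs with h1 h2 h3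
  · -- mixture case
    have hspec := h1.choose_spec
    have hlospec := h2.choose_spec
    set hi := h1.choose
    set lo := h2.choose
    have hat : q lo B < t := lo_lt_of_spec hspec hlospec.1
    have htb : t ≤ q hi B := hspec.1
    have hlohi : RR q B lo hi := by
      rcases htot hi lo with h | h
      · exact absurd h hlospec.1
      · exact h
    have hden0 : q hi B - q lo B ≠ 0 := by
      simp only [ne_eq, tsub_eq_zero_iff_le, not_le]
      exact lt_of_lt_of_le hat htb
    have hdentop : q hi B - q lo B ≠ ⊤ := by
      exact (lt_of_le_of_lt (tsub_le_self) (lt_top_iff_ne_top.2 (hfin hi))).ne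
    have hsum : (q hi B - t) / (q hi B - q lo B) + (t - q lo B) / (q hi B - q lo B) = 1 := by
      rw [ENNReal.div_add_div_same, tsub_add_tsub_cancel htb (le_of_lt hat),
        ENNReal.div_self hden0 hdentop]
    by_cases hcase : RR q B hi i
    · left
      intro A hA
      simp only [Measure.add_apply, Measure.smul_apply, smul_eq_mul,
        Measure.restrict_apply hA]
      calc (q hi B - t) / (q hi B - q lo B) * q lo (A ∩ B) +
            (t - q lo B) / (q hi B - q lo B) * q hi (A ∩ B)
          ≤ (q hi B - t) / (q hi B - q lo B) * q hi (A ∩ B) +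
            (t - q lo B) / (q hi B - q lo B) * q hi (A ∩ B) := by
            gcongr _ * ?_ + _
            exact hlohi (A ∩ B) (hA.inter hB) Set.inter_subset_right
        _ = q hi (A ∩ B) := by rw [← add_mul, hsum, one_mul]
        _ ≤ q i (A ∩ B) := hcase (A ∩ B) (hA.inter hB) Set.inter_subset_right
    · right
      intro A hA
      have hilo : RR q B i lo := hlospec.2 i hcase
      simp only [Measure.add_apply, Measure.smul_apply, smul_eq_mul,
        Measure.restrict_apply hA]
      calc q i (A ∩ B) ≤ q lo (A ∩ B) := hilo (A ∩ B) (hA.inter hB) Set.inter_subset_right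
        _ = ((q hi B - t) / (q hi B - q lo B) + (t - q lo B) / (q hi B - q lo B)) *
            q lo (A ∩ B) := by rw [hsum, one_mul]
        _ = (q hi B - t) / (q hi B - q lo B) * q lo (A ∩ B) +
            (t - q lo B) / (q hi B - q lo B) * q lo (A ∩ B) := by rw [add_mul]
        _ ≤ (q hi B - t) / (q hi B - q lo B) * q lo (A ∩ B) +
            (t - q lo B) / (q hi B - q lo B) * q hi (A ∩ B) := by
            gcongr _ + _ * ?_
            exact hlohi (A ∩ B) (hA.inter hB) Set.inter_subset_right
  · -- scale down: hi is global minimum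
    have hspec := h1.choose_spec
    set hi := h1.choose
    have hmin : ∀ j, RR q B hi j := by
      intro j
      by_cases hj : RR q B hi j
      · exact hj
      · exfalso
        obtain ⟨m, hm, hmax⟩ := finset_exists_rel_max' (R := RR q B)
          htot (fun hab hbc => rr_trans hab hbc)
          (Finset.univ.filter fun j => ¬ RR q B hi j) ⟨j, by simpa using hj⟩
        simp only [Finset.mem_filter, Finset.mem_univ, true_and] at hm hmax
        exact h2 ⟨m, hm, fun k hk => hmax k hk⟩
    left
    intro A hA
    simp only [Measure.smul_apply, smul_eq_mul, Measure.restrict_apply hA]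
    have hle1 : t / q hi B ≤ 1 := by
      rcases eq_or_ne (q hi B) 0 with h0 | h0
      · have ht0 : t = 0 := le_antisymm (h0 ▸ hspec.1) zero_le
        simp [ht0]
      · exact ENNReal.div_le_of_le_mul (by simpa using hspec.1)
    calc t / q hi B * q hi (A ∩ B) ≤ 1 * q hi (A ∩ B) := by gcongr
      _ = q hi (A ∩ B) := one_mul _
      _ ≤ q i (A ∩ B) := hmin i (A ∩ B) (hA.inter hB) Set.inter_subset_right
  · -- scale up
    have htopspec := h3.choose_spec
    set top := h3.choose
    have hUe : ∀ j, q j B < t := by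
      intro j
      by_contra h
      push_neg at h
      obtain ⟨m, hm, hmax⟩ := finset_exists_rel_max' (R := fun a b => RR q B b a)
        (fun a b => (htot b a)) (fun hab hbc => rr_trans hbc hab)
        (Finset.univ.filter fun j => t ≤ q j B) ⟨j, by simpa using h⟩
      simp only [Finset.mem_filter, Finset.mem_univ, true_and] at hm hmax
      exact h1 ⟨m, hm, fun k hk => hmax k hk⟩
    right
    intro A hA
    simp only [Measure.smul_apply, smul_eq_mul, Measure.restrict_apply hA]
    rcases eq_or_ne (q top B) 0 with h0 | h0
    · have : q i (A ∩ B) = 0 := by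
        have h1' := htopspec i (A ∩ B) (hA.inter hB) Set.inter_subset_right
        have h2' := measure_mono (μ := q top) (Set.inter_subset_right (s := A) (t := B))
        exact le_antisymm (le_trans h1' (by rw [h0] at h2'; simpa using h2')) zero_le
      simp [this]
    · have hge1 : 1 ≤ t / q top B := by
        rw [ENNReal.le_div_iff_mul_le (Or.inl h0) (Or.inl (hfin top))]
        rw [one_mul]
        exact le_of_lt (hUe top)
      calc q i (A ∩ B) ≤ q top (A ∩ B) := htopspec i (A ∩ B) (hA.inter hB) Set.inter_subset_right
        _ = 1 * q top (A ∩ B) := (one_mul _).symm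
        _ ≤ t / q top B * q top (A ∩ B) := by gcongr
  · -- impossible
    exfalso
    obtain ⟨m, hm, hmax⟩ := finset_exists_rel_max' (R := RR q B)
      htot (fun hab hbc => rr_trans hab hbc) Finset.univ
      ⟨⟨0, hn⟩, Finset.mem_univ _⟩
    exact h3 ⟨m, fun j => hmax j (Finset.mem_univ j)⟩

end mixsec


section conc

variable {α : Type*} [MeasurableSpace α] (p : Measure α) [IsProbabilityMeasure p]

lemma pi_map_eval (m : ℕ) (j : Fin m) :
    Measure.map (fun S : Fin m → α => S j) (Measure.pi fun _ => p) = p := by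
  classical
  ext s hs
  rw [Measure.map_apply (measurable_pi_apply j) hs]
  have : (fun S : Fin m → α => S j) ⁻¹' s =
      Set.pi Set.univ (Function.update (fun _ => Set.univ) j s) := Set.eval_preimage
  rw [this, Measure.pi_pi]
  rw [Finset.prod_eq_single j]
  · simp
  · intro k _ hk
    simp [Function.update_of_ne hk]
  · simp

lemma eval_indepFun (m : ℕ) {j k : Fin m} (hjk : j ≠ k) :
    IndepFun (fun S : Fin m → α => S j) (fun S : Fin m → α => S k)
      (Measure.pi fun _ => p) := by
  classical
  rw [indepFun_iff_measure_inter_preimage_eq_mul]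
  intro s t hs ht
  have h1 : (fun S : Fin m → α => S j) ⁻¹' s ∩ (fun S : Fin m → α => S k) ⁻¹' t =
      Set.pi Set.univ
        (Function.update (Function.update (fun _ => Set.univ) j s) k t) := by
    ext x
    simp only [Set.mem_inter_iff, Set.mem_preimage, Set.mem_univ_pi]
    constructor
    · rintro ⟨h1, h2⟩ i
      rcases eq_or_ne i k with rfl | hik
      · simpa [Function.update_self]
      · rcases eq_or_ne i j with rfl | hij
        · simpa [Function.update_of_ne hik, Function.update_self]
        · simp [Function.update_of_ne hik, Function.update_of_ne hij]
    · intro h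
      constructor
      · have := h j
        simpa [Function.update_of_ne hjk, Function.update_self] using this
      · have := h k
        simpa [Function.update_self] using this
  have h2 : Measure.pi (fun _ : Fin m => p) ((fun S : Fin m → α => S j) ⁻¹' s) = p s := by
    rw [← Measure.map_apply (measurable_pi_apply j) hs, pi_map_eval]
  have h3 : Measure.pi (fun _ : Fin m => p) ((fun S : Fin m → α => S k) ⁻¹' t) = p t := by
    rw [← Measure.map_apply (measurable_pi_apply k) ht, pi_map_eval]
  rw [h1, Measure.pi_pi, h2, h3]
  rw [← Finset.mul_prod_erase Finset.univ _ (Finset.mem_univ k)]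
  have hjmem : j ∈ Finset.univ.erase k := Finset.mem_erase.2 ⟨hjk, Finset.mem_univ j⟩
  rw [← Finset.mul_prod_erase _ _ hjmem]
  rw [Function.update_self, Function.update_of_ne hjk, Function.update_self]
  have : ∀ i ∈ (Finset.univ.erase k).erase j,
      p (Function.update (Function.update (fun _ => Set.univ) j s) k t i) = 1 := by
    intro i hi
    obtain ⟨hij, hi2⟩ := Finset.mem_erase.1 hi
    obtain ⟨hik, _⟩ := Finset.mem_erase.1 hi2
    simp [Function.update_of_ne hik, Function.update_of_ne hij]
  rw [Finset.prod_congr rfl this]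
  simp [mul_comm]

/-- Chebyshev bound for the empirical frequency of a set. -/
lemma count_conc {B : Set α} (hB : MeasurableSet B) (m : ℕ) (hm : 0 < m)
    {c : ℝ} (hc : 0 < c) :
    Measure.pi (fun _ : Fin m => p)
      {S | c ≤ |(∑ j : Fin m, B.indicator (fun _ => (1:ℝ)) (S j)) / m - (p B).toReal|}
      ≤ ENNReal.ofReal (1 / (m * c ^ 2)) := by
  classical
  set PP : Measure (Fin m → α) := Measure.pi fun _ : Fin m => p with hPP
  have hXmeas : ∀ j : Fin m, Measurable fun S : Fin m → α =>
      B.indicator (fun _ => (1:ℝ)) (S j) := fun j =>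
    (measurable_const.indicator hB).comp (measurable_pi_apply j)
  set X : Fin m → (Fin m → α) → ℝ := fun j S => B.indicator (fun _ => (1:ℝ)) (S j) with hX
  have hXbd : ∀ j S, |X j S| ≤ 1 := by
    intro j S
    by_cases h : S j ∈ B <;> simp [hX, Set.indicator_apply, h]
  have hXmem : ∀ j : Fin m, MemLp (X j) 2 PP := fun j =>
    MemLp.of_bound (hXmeas j).aestronglyMeasurable 1
      (Filter.Eventually.of_forall fun S => by simpa using hXbd j S)
  have hXint : ∀ j : Fin m, ∫ S, X j S ∂PP = (p B).toReal := by
    intro j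
    have : ∫ S, X j S ∂PP =
        ∫ x, B.indicator (fun _ => (1:ℝ)) x ∂(Measure.map (fun S : Fin m → α => S j) PP) := by
      rw [integral_map (measurable_pi_apply j).aemeasurable]
      exact (measurable_const.indicator hB).aestronglyMeasurable
    rw [this, hPP, pi_map_eval, integral_indicator_const _ hB]
    simp
    rfl
  -- variance of each X j at most 1
  have hXvar : ∀ j : Fin m, variance (X j) PP ≤ 1 := by
    intro j
    refine le_trans (variance_le_expectation_sq (hXmeas j).aestronglyMeasurable) ?_
    have hsq : (X j) ^ 2 = X j := by
      funext S
      by_cases h : S j ∈ B <;> simp [hX, Set.indicator_apply, h]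
    rw [hsq, hXint j]
    exact ENNReal.toReal_le_of_le_ofReal zero_le_one (by simpa using prob_le_one)
  -- sum
  set T : (Fin m → α) → ℝ := fun S => ∑ j : Fin m, X j S with hT
  have hTmem : MemLp T 2 PP := by
    have : T = ∑ j : Fin m, X j := by funext S; simp [hT, Finset.sum_apply]
    rw [this]
    exact memLp_finsetSum' _ fun j _ => hXmem j
  have hTint : ∫ S, T S ∂PP = m * (p B).toReal := by
    rw [hT]
    rw [integral_finset_sum _ fun j _ => (hXmem j).integrable one_le_two]
    simp [hXint]
  have hTvar : variance T PP ≤ m := by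
    have : T = ∑ j : Fin m, X j := by funext S; simp [hT, Finset.sum_apply]
    rw [this, IndepFun.variance_sum (fun j _ => hXmem j)
      (fun j _ k _ hjk => by
        exact IndepFun.comp (eval_indepFun p m hjk)
          (measurable_const.indicator hB) (measurable_const.indicator hB))]
    calc ∑ j : Fin m, variance (X j) PP ≤ ∑ _j : Fin m, (1:ℝ) :=
          Finset.sum_le_sum fun j _ => hXvar j
      _ = m := by simp
  -- Chebyshev
  have hcm : 0 < (m : ℝ) * c := by positivity
  have cheb := meas_ge_le_variance_div_sq (μ := PP) hTmem hcm
  have hincl : {S : Fin m → α | c ≤ |(∑ j : Fin m, X j S) / m - (p B).toReal|} ⊆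
      {S | (m : ℝ) * c ≤ |T S - PP[T]|} := by
    intro S hS
    simp only [Set.mem_setOf_eq] at hS ⊢
    rw [hTint]
    have hmpos : (0:ℝ) < m := by exact_mod_cast hm
    have : |(∑ j : Fin m, X j S) / m - (p B).toReal| = |T S - m * (p B).toReal| / m := by
      rw [← abs_of_pos hmpos, ← abs_div]
      congr 1
      field_simp [hT]
      simp only [hT]
      rw [abs_of_pos hmpos]
      ring
    rw [this] at hS
    calc (m:ℝ) * c ≤ m * (|T S - m * (p B).toReal| / m) := by gcongr
      _ = |T S - m * (p B).toReal| := by field_simp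
  refine le_trans (measure_mono hincl) (le_trans cheb ?_)
  apply ENNReal.ofReal_le_ofReal
  rw [div_le_div_iff₀ (by positivity) (by positivity)]
  calc variance T PP * (m * c ^ 2) ≤ m * (m * c^2) := by
        apply mul_le_mul_of_nonneg_right hTvar (by positivity)
    _ = 1 * ((m:ℝ) * c) ^ 2 := by ring
  
end conc


set_option maxHeartbeats 2000000 in
theorem improper_general {α : Type*} [MeasurableSpace α] (n : ℕ) (hn : 1 ≤ n)
    (q : Fin n → Measure α) (hq : ∀ i, IsProbabilityMeasure (q i))
    (ε δ : ℝ) (hε : ε ∈ Set.Ioo (0:ℝ) 1) (hδ : δ ∈ Set.Ioo (0:ℝ) 1) :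
    ∃ (m : ℕ) (A : (Fin m → α) → Measure α),
      Measurable A ∧ (∀ S, IsProbabilityMeasure (A S)) ∧
      ∀ p : Measure α, IsProbabilityMeasure p →
        ENNReal.ofReal (1 - δ) ≤
          Measure.pi (fun _ : Fin m => p)
            {S | tv (A S) p ≤ 2 * (⨅ i, tv p (q i)) + ε} := by
  classical
  -- Hahn decomposition sets
  have hahn : ∀ i j : Fin n, ∃ s, MeasurableSet s ∧
      (∀ t, MeasurableSet t → t ⊆ s → q j t ≤ q i t) ∧
      (∀ t, MeasurableSet t → t ⊆ sᶜ → q i t ≤ q j t) := by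
    intro i j
    have := hq i; have := hq j
    exact hahn_decomposition (μ := q i) (ν := q j)
  set SS : Fin n → Fin n → Set α := fun i j => (hahn i j).choose with hSS
  have hSSmeas : ∀ i j, MeasurableSet (SS i j) := fun i j => (hahn i j).choose_spec.1
  have hSSpos : ∀ i j, ∀ t, MeasurableSet t → t ⊆ SS i j → q j t ≤ q i t :=
    fun i j => (hahn i j).choose_spec.2.1
  have hSSneg : ∀ i j, ∀ t, MeasurableSet t → t ⊆ (SS i j)ᶜ → q i t ≤ q j t :=
    fun i j => (hahn i j).choose_spec.2.2
  -- atoms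
  set Atom : (Fin n → Fin n → Bool) → Set α :=
    fun c => ⋂ i, ⋂ j, (if c i j then SS i j else (SS i j)ᶜ) with hAtom
  have hAtmeas : ∀ c, MeasurableSet (Atom c) := by
    intro c
    refine MeasurableSet.iInter fun i => MeasurableSet.iInter fun j => ?_
    split
    · exact hSSmeas i j
    · exact (hSSmeas i j).compl
  set pat : α → (Fin n → Fin n → Bool) := fun x i j => if x ∈ SS i j then true else false
    with hpatdef
  have hmem : ∀ x, x ∈ Atom (pat x) := by
    intro x
    simp only [hAtom, Set.mem_iInter]
    intro i j
    by_cases h : x ∈ SS i j <;> simp [hpatdef, h]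
  have hpat : ∀ x c, x ∈ Atom c → pat x = c := by
    intro x c hx
    funext i j
    simp only [hAtom, Set.mem_iInter] at hx
    have := hx i j
    by_cases h : c i j = true
    · rw [h] at this; simp only [if_true] at this
      simp [hpatdef, this, h]
    · rw [Bool.not_eq_true] at h
      rw [h] at this; simp only [Bool.false_eq_true, if_false] at this
      have hnot : x ∉ SS i j := this
      simp [hpatdef, hnot, h]
  have hdisj : ∀ (A : Set α), (Set.univ : Set (Fin n → Fin n → Bool)).PairwiseDisjoint
      (fun c => A ∩ Atom c) := by
    intro A c _ c' _ hne
    rw [Function.onFun, Set.disjoint_left]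
    rintro x ⟨_, hx⟩ ⟨_, hx'⟩
    exact hne ((hpat x c hx) ▸ (hpat x c' hx'))
  have hsplit : ∀ (μ : Measure α) (A : Set α), MeasurableSet A →
      μ A = ∑ c : (Fin n → Fin n → Bool), μ (A ∩ Atom c) := by
    intro μ A hA
    have hcover : A = ⋃ c ∈ (Finset.univ : Finset (Fin n → Fin n → Bool)), A ∩ Atom c := by
      ext x
      simp only [Set.mem_iUnion, Set.mem_inter_iff]
      exact ⟨fun hx => ⟨pat x, Finset.mem_univ _, hx, hmem x⟩, fun ⟨c, _, hx, _⟩ => hx⟩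
    conv_lhs => rw [hcover]
    rw [measure_biUnion_finset (by simpa using hdisj A)
      (fun c _ => hA.inter (hAtmeas c))]
  have hRtot : ∀ c, ∀ i j, RR q (Atom c) i j ∨ RR q (Atom c) j i := by
    intro c i j
    have hsub : Atom c ⊆ (if c i j then SS i j else (SS i j)ᶜ) := by
      intro x hx
      simp only [hAtom, Set.mem_iInter] at hx
      exact hx i j
    by_cases h : c i j = true
    · rw [h, if_pos rfl] at hsub
      exact Or.inr fun A hA hAB => hSSpos i j A hA (hAB.trans hsub)
    · rw [Bool.not_eq_true] at h
      rw [h] at hsub; simp only [Bool.false_eq_true, if_false] at hsub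
      exact Or.inl fun A hA hAB => hSSneg i j A hA (hAB.trans hsub)
  have hfinq : ∀ c, ∀ i, q i (Atom c) ≠ ⊤ := fun c i => measure_ne_top _ _
  have hn0 : 0 < n := hn
  -- constants
  set N : ℕ := Fintype.card (Fin n → Fin n → Bool) with hN
  have hNpos : 0 < N := Fintype.card_pos
  set ε₁ : ℝ := ε / (2 * N) with hε₁
  have hε₁pos : 0 < ε₁ := by
    apply div_pos hε.1
    positivity
  set m : ℕ := ⌈(N : ℝ) / (δ * ε₁ ^ 2)⌉₊ + 1 with hm
  have hmpos : 0 < m := Nat.succ_pos _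
  have hmbig : (N : ℝ) / (δ * ε₁ ^ 2) ≤ m := by
    calc (N : ℝ) / (δ * ε₁ ^ 2) ≤ ⌈(N : ℝ) / (δ * ε₁ ^ 2)⌉₊ := Nat.le_ceil _
      _ ≤ m := by rw [hm]; push_cast; linarith
  -- counts
  set cnt : (Fin m → α) → (Fin n → Fin n → Bool) → ℕ :=
    fun S c => ∑ j : Fin m, if S j ∈ Atom c then 1 else 0 with hcnt
  have hcnt_sum : ∀ S, ∑ c : (Fin n → Fin n → Bool), cnt S c = m := by
    intro S
    simp only [hcnt]
    rw [Finset.sum_comm]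
    have hiff : ∀ (j : Fin m) (c : Fin n → Fin n → Bool),
        (S j ∈ Atom c) ↔ (c = pat (S j)) :=
      fun j c => ⟨fun h => (hpat _ _ h).symm, fun h => h ▸ hmem _⟩
    calc ∑ j : Fin m, ∑ c : (Fin n → Fin n → Bool), (if S j ∈ Atom c then 1 else 0)
        = ∑ j : Fin m, ∑ c : (Fin n → Fin n → Bool), (if c = pat (S j) then 1 else 0) := by
          apply Finset.sum_congr rfl
          intro j _
          apply Finset.sum_congr rfl
          intro c _
          simp only [hiff j c]
      _ = ∑ _j : Fin m, 1 := by
          apply Finset.sum_congr rfl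
          intro j _
          rw [Finset.sum_ite_eq' Finset.univ (pat (S j)) (fun _ => 1)]
          simp
      _ = m := by simp
  have hcnt_le : ∀ S c, cnt S c ≤ m := by
    intro S c
    simp only [hcnt]
    calc ∑ j : Fin m, (if S j ∈ Atom c then 1 else 0) ≤ ∑ _j : Fin m, 1 :=
          Finset.sum_le_sum fun j _ => by split <;> simp
      _ = m := by simp
  -- the algorithm
  set part : (Fin n → Fin n → Bool) → (Fin m → α) → Measure α :=
    fun c S => if ∀ i, q i (Atom c) = 0 then
        (m : ℝ≥0∞)⁻¹ • ((∑ j : Fin m, Measure.dirac (S j)).restrict (Atom c))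
      else mix q (Atom c) ((cnt S c : ℝ≥0∞) / m) with hpart
  set Alg : (Fin m → α) → Measure α := fun S => ∑ c : (Fin n → Fin n → Bool), part c S
    with hAlg
  have hpart_inter : ∀ c S {A : Set α}, MeasurableSet A →
      part c S A = part c S (A ∩ Atom c) := by
    intro c S A hA
    by_cases hd : ∀ i, q i (Atom c) = 0
    · simp only [hpart, if_pos hd, Measure.smul_apply, smul_eq_mul,
        Measure.restrict_apply hA, Measure.restrict_apply (hA.inter (hAtmeas c)),
        Set.inter_assoc, Set.inter_self]
    · simp only [hpart, if_neg hd]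
      exact mix_inter q _ _ (hAtmeas c) hA
  have hpart_total : ∀ c S, part c S (Atom c) = (cnt S c : ℝ≥0∞) / m := by
    intro c S
    by_cases hd : ∀ i, q i (Atom c) = 0
    · simp only [hpart, if_pos hd, Measure.smul_apply, smul_eq_mul,
        Measure.restrict_apply (hAtmeas c), Set.inter_self,
        Measure.finset_sum_apply]
      have hdir : ∀ j : Fin m, Measure.dirac (S j) (Atom c) =
          (if S j ∈ Atom c then (1:ℝ≥0∞) else 0) := by
        intro j
        rw [Measure.dirac_apply' _ (hAtmeas c)]
        simp [Set.indicator_apply]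
      rw [Finset.sum_congr rfl fun j _ => hdir j]
      have : (∑ j : Fin m, if S j ∈ Atom c then (1:ℝ≥0∞) else 0) = (cnt S c : ℝ≥0∞) := by
        simp only [hcnt]
        push_cast
        apply Finset.sum_congr rfl
        intro j _
        split <;> simp
      rw [this, ENNReal.div_eq_inv_mul]
    · simp only [hpart, if_neg hd]
      push_neg at hd
      exact mix_total q _ _ (hAtmeas c) (hRtot c) (hfinq c) hn0 fun _ => hd
  have hpart_os : ∀ c S (i : Fin n),
      (∀ A, MeasurableSet A → part c S A ≤ q i (A ∩ Atom c)) ∨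
      (∀ A, MeasurableSet A → q i (A ∩ Atom c) ≤ part c S A) := by
    intro c S i
    by_cases hd : ∀ i, q i (Atom c) = 0
    · right
      intro A hA
      have : q i (A ∩ Atom c) = 0 :=
        le_antisymm (le_trans (measure_mono Set.inter_subset_right) (hd i).le) zero_le
      rw [this]
      exact zero_le
    · simp only [hpart, if_neg hd]
      exact mix_onesided q _ _ (hAtmeas c) (hRtot c) (hfinq c) hn0 i
  have hpart_fin : ∀ c S {A : Set α}, MeasurableSet A → part c S A ≠ ⊤ := by
    intro c S A hA
    have h1 : part c S A ≤ part c S (Atom c) := by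
      rw [hpart_inter c S hA]
      exact measure_mono Set.inter_subset_right
    rw [hpart_total c S] at h1
    exact ne_top_of_le_ne_top
      (ENNReal.div_lt_top (ENNReal.natCast_ne_top _)
        (by exact_mod_cast Nat.pos_iff_ne_zero.mp hmpos)).ne h1
  have hAlg_apply : ∀ S (A : Set α),
      Alg S A = ∑ c : (Fin n → Fin n → Bool), part c S A := by
    intro S A
    simp only [hAlg]
    exact Measure.finset_sum_apply _ _ _
  have hAlg_prob : ∀ S, IsProbabilityMeasure (Alg S) := by
    intro S
    constructor
    rw [hAlg_apply S Set.univ]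
    have heach : ∀ c, part c S Set.univ = (cnt S c : ℝ≥0∞) / m := by
      intro c
      rw [hpart_inter c S MeasurableSet.univ, Set.univ_inter, hpart_total]
    rw [Finset.sum_congr rfl fun c _ => heach c]
    simp_rw [ENNReal.div_eq_inv_mul]
    rw [← Finset.mul_sum, ← Nat.cast_sum, hcnt_sum S]
    exact ENNReal.inv_mul_cancel (by exact_mod_cast Nat.pos_iff_ne_zero.mp hmpos)
      (ENNReal.natCast_ne_top _)
  have hcntmeas : ∀ c, Measurable fun S : Fin m → α => cnt S c := by
    intro c
    simp only [hcnt]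
    apply Finset.measurable_sum
    intro j _
    apply Measurable.ite _ measurable_const measurable_const
    exact (measurable_pi_apply j) (hAtmeas c)
  have hAlg_meas : Measurable Alg := by
    rw [Measure.measurable_measure]
    intro Eset hEset
    have heq : (fun S => Alg S Eset) =
        fun S => ∑ c : (Fin n → Fin n → Bool), part c S Eset :=
      funext fun S => hAlg_apply S Eset
    rw [heq]
    apply Finset.measurable_sum
    intro c _
    by_cases hd : ∀ i, q i (Atom c) = 0
    · have heq2 : (fun S : Fin m → α => part c S Eset) =
          fun S => (m : ℝ≥0∞)⁻¹ *
            ∑ j : Fin m, (Eset ∩ Atom c).indicator (1 : α → ℝ≥0∞) (S j) := by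
        funext S
        simp only [hpart, if_pos hd, Measure.smul_apply, smul_eq_mul,
          Measure.restrict_apply hEset, Measure.finset_sum_apply]
        congr 1
        apply Finset.sum_congr rfl
        intro j _
        rw [Measure.dirac_apply' _ (hEset.inter (hAtmeas c))]
      rw [heq2]
      apply Measurable.const_mul
      apply Finset.measurable_sum
      intro j _
      exact (measurable_const.indicator (hEset.inter (hAtmeas c))).comp
        (measurable_pi_apply j)
    · have heq2 : (fun S : Fin m → α => part c S Eset) =
          (fun k : ℕ => mix q (Atom c) ((k : ℝ≥0∞) / m) Eset) ∘ (fun S => cnt S c) := by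
        funext S
        simp only [hpart, if_neg hd, Function.comp_apply]
      rw [heq2]
      exact (measurable_of_countable _).comp (hcntmeas c)
  refine ⟨m, Alg, hAlg_meas, hAlg_prob, ?_⟩
  intro p hp
  haveI := hp
  -- best index
  obtain ⟨istar, -, histar⟩ := finset_exists_rel_max'
    (R := fun a b : Fin n => tv p (q b) ≤ tv p (q a)) (fun a b => le_total _ _)
    (fun h h' => le_trans h' h) Finset.univ ⟨⟨0, hn0⟩, Finset.mem_univ _⟩
  haveI : Nonempty (Fin n) := ⟨⟨0, hn0⟩⟩
  have hoptle : tv p (q istar) ≤ ⨅ i, tv p (q i) :=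
    le_ciInf fun i => histar i (Finset.mem_univ i)
  haveI := hq istar
  -- the good event
  set tR : (Fin m → α) → (Fin n → Fin n → Bool) → ℝ := fun S c => (cnt S c : ℝ) / m with htR
  set E : Set (Fin m → α) :=
    {S | ∀ c, |tR S c - (p (Atom c)).toReal| ≤ ε₁} with hE
  -- deterministic analysis on the good event
  have claimA : ∀ S ∈ E, tv (Alg S) p ≤ 2 * (⨅ i, tv p (q i)) + ε := by
    intro S hS
    haveI := hAlg_prob S
    simp only [hE, Set.mem_setOf_eq] at hS
    set aR : (Fin n → Fin n → Bool) → ℝ := fun c => (q istar (Atom c)).toReal with haR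
    set pR : (Fin n → Fin n → Bool) → ℝ := fun c => (p (Atom c)).toReal with hpR
    have hptR : ∀ c, part c S (Atom c) = ENNReal.ofReal (tR S c) := by
      intro c
      rw [hpart_total c S, htR]
      rw [ENNReal.ofReal_div_of_pos (by exact_mod_cast hmpos)]
      simp [ENNReal.ofReal_natCast]
    have hptRR : ∀ c, (part c S (Atom c)).toReal = tR S c := by
      intro c
      rw [hptR c, ENNReal.toReal_ofReal (by positivity)]
    -- per-atom bounds
    have hterm_ub : ∀ (A : Set α), MeasurableSet A → ∀ c,
        (part c S A).toReal - (q istar (A ∩ Atom c)).toReal ≤ max 0 (tR S c - aR c) := by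
      intro A hA c
      rcases hpart_os c S istar with hos | hos
      · have h1 : (part c S A).toReal ≤ (q istar (A ∩ Atom c)).toReal :=
          ENNReal.toReal_mono (measure_ne_top _ _) (hos A hA)
        have := le_max_left (0:ℝ) (tR S c - aR c)
        linarith
      · refine le_trans ?_ (le_max_right 0 _)
        have hAc : MeasurableSet (A ∩ Atom c) := hA.inter (hAtmeas c)
        have hdm : MeasurableSet (Atom c \ A) := (hAtmeas c).diff hA
        have heq1 : part c S (Atom c ∩ A) + part c S (Atom c \ A) = part c S (Atom c) :=
          measure_inter_add_diff (Atom c) hA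
        have heq2 : q istar (Atom c ∩ A) + q istar (Atom c \ A) = q istar (Atom c) :=
          measure_inter_add_diff (Atom c) hA
        have hge : q istar (Atom c \ A) ≤ part c S (Atom c \ A) := by
          have := hos (Atom c \ A) hdm
          rwa [Set.inter_eq_left.mpr Set.diff_subset] at this
        -- to reals
        have hfin1 : part c S (Atom c ∩ A) ≠ ⊤ := hpart_fin c S ((hAtmeas c).inter hA)
        have hfin2 : part c S (Atom c \ A) ≠ ⊤ := hpart_fin c S hdm
        have hr1 : (part c S (Atom c ∩ A)).toReal + (part c S (Atom c \ A)).toReal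
            = tR S c := by
          rw [← ENNReal.toReal_add hfin1 hfin2, heq1, hptRR]
        have hr2 : (q istar (Atom c ∩ A)).toReal + (q istar (Atom c \ A)).toReal = aR c := by
          rw [← ENNReal.toReal_add (measure_ne_top _ _) (measure_ne_top _ _), heq2]
        have hr3 : (q istar (Atom c \ A)).toReal ≤ (part c S (Atom c \ A)).toReal :=
          ENNReal.toReal_mono hfin2 hge
        have hr4 : (part c S A).toReal = (part c S (Atom c ∩ A)).toReal := by
          rw [hpart_inter c S hA, Set.inter_comm]
        have hr5 : (q istar (A ∩ Atom c)).toReal = (q istar (Atom c ∩ A)).toReal := by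
          rw [Set.inter_comm]
        linarith
    have hterm_lb : ∀ (A : Set α), MeasurableSet A → ∀ c,
        (q istar (A ∩ Atom c)).toReal - (part c S A).toReal ≤ max 0 (aR c - tR S c) := by
      intro A hA c
      rcases hpart_os c S istar with hos | hos
      · refine le_trans ?_ (le_max_right 0 _)
        have hAc : MeasurableSet (A ∩ Atom c) := hA.inter (hAtmeas c)
        have hdm : MeasurableSet (Atom c \ A) := (hAtmeas c).diff hA
        have heq1 : part c S (Atom c ∩ A) + part c S (Atom c \ A) = part c S (Atom c) :=
          measure_inter_add_diff (Atom c) hA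
        have heq2 : q istar (Atom c ∩ A) + q istar (Atom c \ A) = q istar (Atom c) :=
          measure_inter_add_diff (Atom c) hA
        have hge : part c S (Atom c \ A) ≤ q istar (Atom c \ A) := by
          have := hos (Atom c \ A) hdm
          rwa [Set.inter_eq_left.mpr Set.diff_subset] at this
        have hfin1 : part c S (Atom c ∩ A) ≠ ⊤ := hpart_fin c S ((hAtmeas c).inter hA)
        have hfin2 : part c S (Atom c \ A) ≠ ⊤ := hpart_fin c S hdm
        have hr1 : (part c S (Atom c ∩ A)).toReal + (part c S (Atom c \ A)).toReal
            = tR S c := by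
          rw [← ENNReal.toReal_add hfin1 hfin2, heq1, hptRR]
        have hr2 : (q istar (Atom c ∩ A)).toReal + (q istar (Atom c \ A)).toReal = aR c := by
          rw [← ENNReal.toReal_add (measure_ne_top _ _) (measure_ne_top _ _), heq2]
        have hr3 : (part c S (Atom c \ A)).toReal ≤ (q istar (Atom c \ A)).toReal :=
          ENNReal.toReal_mono (measure_ne_top _ _) hge
        have hr4 : (part c S A).toReal = (part c S (Atom c ∩ A)).toReal := by
          rw [hpart_inter c S hA, Set.inter_comm]
        have hr5 : (q istar (A ∩ Atom c)).toReal = (q istar (Atom c ∩ A)).toReal := by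
          rw [Set.inter_comm]
        linarith
      · have h1 : (q istar (A ∩ Atom c)).toReal ≤ (part c S A).toReal :=
          ENNReal.toReal_mono (hpart_fin c S hA) (hos A hA)
        have := le_max_left (0:ℝ) (aR c - tR S c)
        linarith
    -- the union-over-atoms bound for signed sums
    have hsum_bound : ∀ (f g : (Fin n → Fin n → Bool) → ℝ),
        (∀ c, f c = (p (Atom c)).toReal) → (∀ c, g c = (q istar (Atom c)).toReal) →
        ∑ c, max 0 (f c - g c) ≤ tv p (q istar) := by
      intro f g hf hg
      set G := Finset.univ.filter (fun c => g c ≤ f c) with hG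
      have hdisj2 : (↑G : Set (Fin n → Fin n → Bool)).PairwiseDisjoint Atom := by
        intro c _ c' _ hne
        rw [Function.onFun, Set.disjoint_left]
        intro x hx hx'
        exact hne ((hpat x c hx) ▸ (hpat x c' hx'))
      have hUmeas : MeasurableSet (⋃ c ∈ G, Atom c) :=
        MeasurableSet.biUnion (Set.to_countable _) fun c _ => hAtmeas c
      have hpU : (p (⋃ c ∈ G, Atom c)).toReal = ∑ c ∈ G, f c := by
        rw [measure_biUnion_finset hdisj2 fun c _ => hAtmeas c]
        rw [ENNReal.toReal_sum fun c _ => measure_ne_top _ _]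
        exact Finset.sum_congr rfl fun c _ => (hf c).symm
      have hqU : (q istar (⋃ c ∈ G, Atom c)).toReal = ∑ c ∈ G, g c := by
        rw [measure_biUnion_finset hdisj2 fun c _ => hAtmeas c]
        rw [ENNReal.toReal_sum fun c _ => measure_ne_top _ _]
        exact Finset.sum_congr rfl fun c _ => (hg c).symm
      have hstep : ∑ c, max 0 (f c - g c) = ∑ c ∈ G, (f c - g c) := by
        rw [← Finset.sum_filter_add_sum_filter_not Finset.univ (fun c => g c ≤ f c)
          (fun c => max 0 (f c - g c))]
        have h1 : ∑ c ∈ Finset.univ.filter (fun c => g c ≤ f c), max 0 (f c - g c)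
            = ∑ c ∈ G, (f c - g c) := by
          apply Finset.sum_congr rfl
          intro c hc
          rw [Finset.mem_filter] at hc
          exact max_eq_right (sub_nonneg.2 hc.2)
        have h2 : ∑ c ∈ Finset.univ.filter (fun c => ¬ g c ≤ f c), max 0 (f c - g c)
            = 0 := by
          apply Finset.sum_eq_zero
          intro c hc
          rw [Finset.mem_filter] at hc
          exact max_eq_left (sub_nonpos.2 (le_of_not_ge hc.2))
        rw [h1, h2, add_zero]
      rw [hstep, Finset.sum_sub_distrib, ← hpU, ← hqU]
      exact le_trans (le_abs_self _) (abs_le_tv p (q istar) hUmeas)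
    -- sums of positive parts are small on the event
    have hposS : ∑ c, max 0 (tR S c - aR c) ≤ tv p (q istar) + N * ε₁ := by
      have h1 : ∀ c, max 0 (tR S c - aR c) ≤ max 0 (pR c - aR c) + ε₁ := by
        intro c
        have habs := abs_le.1 (hS c)
        apply max_le
        · have := le_max_left (0:ℝ) (pR c - aR c); linarith [hε₁pos.le]
        · have := le_max_left (0:ℝ) (pR c - aR c)
          have h2 := le_max_right (0:ℝ) (pR c - aR c)
          have : tR S c - aR c ≤ (pR c - aR c) + ε₁ := by linarith [habs.2]
          linarith [le_max_right (0:ℝ) (pR c - aR c)]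
      calc ∑ c, max 0 (tR S c - aR c) ≤ ∑ c, (max 0 (pR c - aR c) + ε₁) :=
            Finset.sum_le_sum fun c _ => h1 c
        _ = (∑ c, max 0 (pR c - aR c)) + N * ε₁ := by
            rw [Finset.sum_add_distrib, Finset.sum_const]
            simp [hN, mul_comm]
        _ ≤ tv p (q istar) + N * ε₁ := by
            have := hsum_bound pR aR (fun c => rfl) (fun c => rfl)
            linarith
    have hnegS : ∑ c, max 0 (aR c - tR S c) ≤ tv p (q istar) + N * ε₁ := by
      have hswap : ∑ c, max 0 (aR c - pR c) ≤ tv p (q istar) := by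
        -- swap roles: use tv symmetry via abs
        set G := Finset.univ.filter (fun c => pR c ≤ aR c) with hG
        have hdisj2 : (↑G : Set (Fin n → Fin n → Bool)).PairwiseDisjoint Atom := by
          intro c _ c' _ hne
          rw [Function.onFun, Set.disjoint_left]
          intro x hx hx'
          exact hne ((hpat x c hx) ▸ (hpat x c' hx'))
        have hUmeas : MeasurableSet (⋃ c ∈ G, Atom c) :=
          MeasurableSet.biUnion (Set.to_countable _) fun c _ => hAtmeas c
        have hpU : (p (⋃ c ∈ G, Atom c)).toReal = ∑ c ∈ G, pR c := by
          rw [measure_biUnion_finset hdisj2 fun c _ => hAtmeas c]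
          exact ENNReal.toReal_sum fun c _ => measure_ne_top _ _
        have hqU : (q istar (⋃ c ∈ G, Atom c)).toReal = ∑ c ∈ G, aR c := by
          rw [measure_biUnion_finset hdisj2 fun c _ => hAtmeas c]
          exact ENNReal.toReal_sum fun c _ => measure_ne_top _ _
        have hstep : ∑ c, max 0 (aR c - pR c) = ∑ c ∈ G, (aR c - pR c) := by
          rw [← Finset.sum_filter_add_sum_filter_not Finset.univ (fun c => pR c ≤ aR c)
            (fun c => max 0 (aR c - pR c))]
          have h1 : ∑ c ∈ Finset.univ.filter (fun c => pR c ≤ aR c), max 0 (aR c - pR c)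
              = ∑ c ∈ G, (aR c - pR c) := by
            apply Finset.sum_congr rfl
            intro c hc
            rw [Finset.mem_filter] at hc
            exact max_eq_right (sub_nonneg.2 hc.2)
          have h2 : ∑ c ∈ Finset.univ.filter (fun c => ¬ pR c ≤ aR c), max 0 (aR c - pR c)
              = 0 := by
            apply Finset.sum_eq_zero
            intro c hc
            rw [Finset.mem_filter] at hc
            exact max_eq_left (sub_nonpos.2 (le_of_not_ge hc.2))
          rw [h1, h2, add_zero]
        rw [hstep, Finset.sum_sub_distrib, ← hpU, ← hqU]
        refine le_trans ?_ (abs_le_tv p (q istar) hUmeas)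
        rw [abs_sub_comm]
        exact le_abs_self _
      have h1 : ∀ c, max 0 (aR c - tR S c) ≤ max 0 (aR c - pR c) + ε₁ := by
        intro c
        have habs := abs_le.1 (hS c)
        apply max_le
        · have := le_max_left (0:ℝ) (aR c - pR c); linarith [hε₁pos.le]
        · have : aR c - tR S c ≤ (aR c - pR c) + ε₁ := by linarith [habs.1]
          linarith [le_max_right (0:ℝ) (aR c - pR c)]
      calc ∑ c, max 0 (aR c - tR S c) ≤ ∑ c, (max 0 (aR c - pR c) + ε₁) :=
            Finset.sum_le_sum fun c _ => h1 c
        _ = (∑ c, max 0 (aR c - pR c)) + N * ε₁ := by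
            rw [Finset.sum_add_distrib, Finset.sum_const]
            simp [hN, mul_comm]
        _ ≤ tv p (q istar) + N * ε₁ := by linarith
    -- put it together
    apply tv_le_of_forall
    intro A hA
    have hAlgR : (Alg S A).toReal = ∑ c, (part c S A).toReal := by
      rw [hAlg_apply]
      exact ENNReal.toReal_sum fun c _ => hpart_fin c S hA
    have hqiR : (q istar A).toReal = ∑ c, (q istar (A ∩ Atom c)).toReal := by
      rw [hsplit (q istar) A hA]
      exact ENNReal.toReal_sum fun c _ => measure_ne_top _ _
    have hd1 : (Alg S A).toReal - (q istar A).toReal ≤ tv p (q istar) + N * ε₁ := by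
      rw [hAlgR, hqiR, ← Finset.sum_sub_distrib]
      exact le_trans (Finset.sum_le_sum fun c _ => hterm_ub A hA c) hposS
    have hd2 : (q istar A).toReal - (Alg S A).toReal ≤ tv p (q istar) + N * ε₁ := by
      rw [hAlgR, hqiR, ← Finset.sum_sub_distrib]
      exact le_trans (Finset.sum_le_sum fun c _ => hterm_lb A hA c) hnegS
    have habs1 : |(Alg S A).toReal - (q istar A).toReal| ≤ tv p (q istar) + N * ε₁ :=
      abs_sub_le_iff.2 ⟨hd1, hd2⟩
    have habs2 : |(q istar A).toReal - (p A).toReal| ≤ tv p (q istar) := by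
      rw [abs_sub_comm]
      exact abs_le_tv p (q istar) hA
    have htri : |(Alg S A).toReal - (p A).toReal| ≤
        2 * tv p (q istar) + N * ε₁ := by
      have := abs_sub_le ((Alg S A).toReal) ((q istar A).toReal) ((p A).toReal)
      linarith
    have hNε : (N : ℝ) * ε₁ ≤ ε := by
      rw [hε₁]
      have hNne : (N : ℝ) ≠ 0 := by exact_mod_cast Nat.pos_iff_ne_zero.mp hNpos
      have : (N : ℝ) * (ε / (2 * N)) = ε / 2 := by field_simp
      rw [this]
      linarith [hε.1]
    calc |(Alg S A).toReal - (p A).toReal| ≤ 2 * tv p (q istar) + N * ε₁ := htri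
      _ ≤ 2 * (⨅ i, tv p (q i)) + ε := by linarith
  -- concentration
  have claimB : ENNReal.ofReal (1 - δ) ≤ Measure.pi (fun _ : Fin m => p) E := by
    set PP := Measure.pi (fun _ : Fin m => p) with hPP
    set Ec : (Fin n → Fin n → Bool) → Set (Fin m → α) :=
      fun c => {S | |tR S c - (p (Atom c)).toReal| ≤ ε₁} with hEc
    have htRmeas : ∀ c, Measurable fun S : Fin m → α => tR S c := by
      intro c
      simp only [htR]
      exact (((measurable_of_countable (fun k : ℕ => (k : ℝ))).comp
        (hcntmeas c)).div_const _)
    have hEcmeas : ∀ c, MeasurableSet (Ec c) := by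
      intro c
      apply measurableSet_le
      · exact ((htRmeas c).sub measurable_const).abs
      · exact measurable_const
    have hEfull : E = ⋂ c, Ec c := by
      ext S
      simp [hE, hEc, Set.mem_iInter]
    have hEmeas : MeasurableSet E := by
      rw [hEfull]
      exact MeasurableSet.iInter fun c => hEcmeas c
    have hcc : ∀ c, PP (Ec c)ᶜ ≤ ENNReal.ofReal (1 / (m * ε₁ ^ 2)) := by
      intro c
      have hsub : (Ec c)ᶜ ⊆ {S : Fin m → α | ε₁ ≤
          |(∑ j : Fin m, (Atom c).indicator (fun _ => (1:ℝ)) (S j)) / m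
            - (p (Atom c)).toReal|} := by
        intro S hSc
        simp only [hEc, Set.mem_compl_iff, Set.mem_setOf_eq, not_le] at hSc
        simp only [Set.mem_setOf_eq]
        have heqc : (∑ j : Fin m, (Atom c).indicator (fun _ => (1:ℝ)) (S j)) / m
            = tR S c := by
          congr 1
          simp only [htR, hcnt]
          push_cast
          apply Finset.sum_congr rfl
          intro j _
          simp [Set.indicator_apply]
        rw [heqc]
        exact le_of_lt hSc
      exact le_trans (measure_mono hsub) (count_conc p (hAtmeas c) m hmpos hε₁pos)
    have hEcompl : PP Eᶜ ≤ ENNReal.ofReal δ := by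
      have h1 : PP Eᶜ ≤ ∑ c, PP (Ec c)ᶜ := by
        rw [hEfull, Set.compl_iInter]
        exact measure_iUnion_fintype_le _ _
      have h2 : ∑ c : (Fin n → Fin n → Bool), PP (Ec c)ᶜ ≤
          ∑ _c : (Fin n → Fin n → Bool), ENNReal.ofReal (1 / (m * ε₁ ^ 2)) :=
        Finset.sum_le_sum fun c _ => hcc c
      have h3 : ∑ _c : (Fin n → Fin n → Bool), ENNReal.ofReal (1 / (m * ε₁ ^ 2)) =
          ENNReal.ofReal (N * (1 / (m * ε₁ ^ 2))) := by
        rw [Finset.sum_const, Finset.card_univ, ← hN, nsmul_eq_mul,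
          ← ENNReal.ofReal_natCast N, ← ENNReal.ofReal_mul (by positivity)]
      have h4 : (N : ℝ) * (1 / (m * ε₁ ^ 2)) ≤ δ := by
        have hm2 : (0:ℝ) < (m : ℝ) * ε₁ ^ 2 := by positivity
        rw [div_le_iff₀ (mul_pos hδ.1 (pow_pos hε₁pos 2))] at hmbig
        rw [mul_one_div, div_le_iff₀ hm2]
        nlinarith
      calc PP Eᶜ ≤ ∑ c, PP (Ec c)ᶜ := h1
        _ ≤ ENNReal.ofReal (N * (1 / (m * ε₁ ^ 2))) := by rw [← h3]; exact h2
        _ ≤ ENNReal.ofReal δ := ENNReal.ofReal_le_ofReal h4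
    haveI : IsProbabilityMeasure PP := by infer_instance
    have hPPE : PP E = 1 - PP Eᶜ := by
      have h := prob_compl_eq_one_sub (μ := PP) hEmeas.compl
      rwa [compl_compl] at h
    rw [hPPE]
    have hkey : ENNReal.ofReal (1 - δ) = 1 - ENNReal.ofReal δ := by
      apply ENNReal.eq_sub_of_add_eq ENNReal.ofReal_ne_top
      rw [← ENNReal.ofReal_add (by linarith [hδ.2]) (le_of_lt hδ.1)]
      norm_num
    rw [hkey]
    exact tsub_le_tsub_left hEcompl 1
  refine le_trans claimB (measure_mono ?_)
  intro S hS
  exact claimA S hS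


/-- **Improper upper bound, factor 2.** For every `d ≥ 1`, every finite class
`Q = {q_1, …, q_n}` of Borel probability measures on `ℝ^d`, and every
`ε, δ ∈ (0,1)`, there exist a sample size `m` and a measurable map `A` from
`(ℝ^d)^m` to probability measures on `ℝ^d` such that for every Borel probability
measure `p`, with `p^{⊗m}`-probability at least `1 - δ` over the sample `S`,
`TV(A(S), p) ≤ 2 · min_i TV(p, q_i) + ε`. -/
theorem improper_upper_bound_factor_two
    (d : ℕ) (hd : 1 ≤ d) (n : ℕ) (hn : 1 ≤ n)
    (q : Fin n → Measure (Fin d → ℝ)) (hq : ∀ i, IsProbabilityMeasure (q i))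
    (ε δ : ℝ) (hε : ε ∈ Set.Ioo (0:ℝ) 1) (hδ : δ ∈ Set.Ioo (0:ℝ) 1) :
    ∃ (m : ℕ) (A : (Fin m → (Fin d → ℝ)) → Measure (Fin d → ℝ)),
      Measurable A ∧ (∀ S, IsProbabilityMeasure (A S)) ∧
      ∀ p : Measure (Fin d → ℝ), IsProbabilityMeasure p →
        ENNReal.ofReal (1 - δ) ≤
          Measure.pi (fun _ : Fin m => p)
            {S | tv (A S) p ≤ 2 * (⨅ i, tv p (q i)) + ε} := by
  exact improper_general n hn q hq ε δ hε hδ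
end

section
/- (Chain rule for total variation.) Let P and Q be probability measures on a measurable space X and let E ⊆ X be a measurable set with P(E) > 0 and Q(E) > 0. Let P|E and Q|E denote the conditional measures, P|E(A) = P(A ∩ E)/P(E) and Q|E(A) = Q(A ∩ E)/Q(E). Then TV(P, Q) ≤ TV(P|E, Q|E) + 2·P(X ∖ E) + 2·Q(X ∖ E). -/
open MeasureTheory ProbabilityTheory
open scoped ENNReal

lemma prob_toReal_le_one {X : Type*} [MeasurableSpace X] (p : Measure X)
    [IsProbabilityMeasure p] (A : Set X) : (p A).toReal ≤ 1 := by
  have h : p A ≤ 1 := prob_le_one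
  calc (p A).toReal ≤ (1 : ℝ≥0∞).toReal := ENNReal.toReal_mono (by simp) h
    _ = 1 := by simp

lemma tv_le_aux {X : Type*} [MeasurableSpace X] (p q : Measure X)
    [IsProbabilityMeasure p] [IsProbabilityMeasure q] (A : Set X) (hA : MeasurableSet A) :
    |(p A).toReal - (q A).toReal| ≤ tv p q := by
  have hb : BddAbove (Set.range fun A : {A : Set X // MeasurableSet A} =>
      |(p A.1).toReal - (q A.1).toReal|) := by
    refine ⟨2, ?_⟩
    rintro x ⟨B, rfl⟩
    have h1 := prob_toReal_le_one p B.1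
    have h2 := prob_toReal_le_one q B.1
    have h3 : (0:ℝ) ≤ (p B.1).toReal := ENNReal.toReal_nonneg
    have h4 : (0:ℝ) ≤ (q B.1).toReal := ENNReal.toReal_nonneg
    rw [abs_le]; constructor <;> linarith
  exact le_ciSup hb ⟨A, hA⟩

set_option maxHeartbeats 1000000 in
/-- **Chain rule for total variation.** For probability measures `P, Q` and a measurable
event `E` of positive probability under both,
`TV(P, Q) ≤ TV(P|E, Q|E) + 2·P(Eᶜ) + 2·Q(Eᶜ)`, where `P|E` is the conditional measure
`P|E(A) = P(A ∩ E)/P(E)`. -/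
theorem tv_chain_rule {X : Type*} [MeasurableSpace X] (P Q : Measure X)
    (hP : IsProbabilityMeasure P) (hQ : IsProbabilityMeasure Q)
    (E : Set X) (hE : MeasurableSet E) (hPE : 0 < P E) (hQE : 0 < Q E) :
    tv P Q ≤ tv (P[|E]) (Q[|E]) + 2 * (P Eᶜ).toReal + 2 * (Q Eᶜ).toReal := by
  have hPcond : IsProbabilityMeasure (P[|E]) := cond_isProbabilityMeasure hPE.ne'
  have hQcond : IsProbabilityMeasure (Q[|E]) := cond_isProbabilityMeasure hQE.ne'
  rw [tv]
  apply ciSup_le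
  rintro ⟨A, hA⟩
  simp only
  -- abbreviations
  set pe := (P E).toReal with hpe_def
  set qe := (Q E).toReal with hqe_def
  set pc := (P Eᶜ).toReal with hpc_def
  set qc := (Q Eᶜ).toReal with hqc_def
  set x := ((P[|E]) A).toReal with hx_def
  set y := ((Q[|E]) A).toReal with hy_def
  have hpe_pos : 0 < pe := ENNReal.toReal_pos hPE.ne' (measure_ne_top P E)
  have hqe_pos : 0 < qe := ENNReal.toReal_pos hQE.ne' (measure_ne_top Q E)
  -- split P A
  have hsplitP : (P A).toReal = (P (A ∩ E)).toReal + (P (A ∩ Eᶜ)).toReal := by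
    rw [← ENNReal.toReal_add (measure_ne_top _ _) (measure_ne_top _ _)]
    congr 1
    rw [← Set.diff_eq]
    exact (measure_inter_add_diff A hE).symm
  have hsplitQ : (Q A).toReal = (Q (A ∩ E)).toReal + (Q (A ∩ Eᶜ)).toReal := by
    rw [← ENNReal.toReal_add (measure_ne_top _ _) (measure_ne_top _ _)]
    congr 1
    rw [← Set.diff_eq]
    exact (measure_inter_add_diff A hE).symm
  -- conditional measure values
  have hcondP : pe * x = (P (A ∩ E)).toReal := by
    rw [hx_def, cond_apply hE, ENNReal.toReal_mul, ENNReal.toReal_inv, Set.inter_comm]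
    field_simp
    exact mul_div_cancel_left₀ _ hpe_pos.ne'
  have hcondQ : qe * y = (Q (A ∩ E)).toReal := by
    rw [hy_def, cond_apply hE, ENNReal.toReal_mul, ENNReal.toReal_inv, Set.inter_comm]
    field_simp
    exact mul_div_cancel_left₀ _ hqe_pos.ne'
  -- complement
  have hcomplP : pe + pc = 1 := by
    rw [hpe_def, hpc_def, ← ENNReal.toReal_add (measure_ne_top _ _) (measure_ne_top _ _),
      measure_add_measure_compl hE]
    simp
  have hcomplQ : qe + qc = 1 := by
    rw [hqe_def, hqc_def, ← ENNReal.toReal_add (measure_ne_top _ _) (measure_ne_top _ _),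
      measure_add_measure_compl hE]
    simp
  -- bounds
  have hx0 : 0 ≤ x := ENNReal.toReal_nonneg
  have hx1 : x ≤ 1 := prob_toReal_le_one _ A
  have hy0 : 0 ≤ y := ENNReal.toReal_nonneg
  have hy1 : y ≤ 1 := prob_toReal_le_one _ A
  have hpa0 : 0 ≤ (P (A ∩ Eᶜ)).toReal := ENNReal.toReal_nonneg
  have hqa0 : 0 ≤ (Q (A ∩ Eᶜ)).toReal := ENNReal.toReal_nonneg
  have hpa1 : (P (A ∩ Eᶜ)).toReal ≤ pc :=
    ENNReal.toReal_mono (measure_ne_top _ _) (measure_mono Set.inter_subset_right)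
  have hqa1 : (Q (A ∩ Eᶜ)).toReal ≤ qc :=
    ENNReal.toReal_mono (measure_ne_top _ _) (measure_mono Set.inter_subset_right)
  have hmain : |(P A).toReal - (Q A).toReal| ≤ |x - y| + 2 * pc + 2 * qc := by
    rw [hsplitP, hsplitQ, ← hcondP, ← hcondQ]
    have t1 : pe * x = x - pc * x := by
      have h : pe = 1 - pc := by linarith
      rw [h]; ring
    have t2 : qe * y = y - qc * y := by
      have h : qe = 1 - qc := by linarith
      rw [h]; ring
    have u0 : 0 ≤ pc * x := mul_nonneg (by linarith) hx0
    have u1 : pc * x ≤ pc := by calc pc * x ≤ pc * 1 := by apply mul_le_mul_of_nonneg_left hx1; linarith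
      _ = pc := mul_one pc
    have v0 : 0 ≤ qc * y := mul_nonneg (by linarith) hy0
    have v1 : qc * y ≤ qc := by calc qc * y ≤ qc * 1 := by apply mul_le_mul_of_nonneg_left hy1; linarith
      _ = qc := mul_one qc
    rw [t1, t2]
    rcases abs_cases (x - y) with ⟨h, _⟩ | ⟨h, _⟩ <;> rw [h] <;>
      rcases abs_cases ((x - pc * x + (P (A ∩ Eᶜ)).toReal) -
        (y - qc * y + (Q (A ∩ Eᶜ)).toReal)) with ⟨h2, _⟩ | ⟨h2, _⟩ <;> rw [h2] <;> linarith
  have htv : |x - y| ≤ tv (P[|E]) (Q[|E]) := tv_le_aux _ _ A hA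
  linarith
end

section
/- (Separation from Q_F with a nonnegative normal.) Let X be a nonempty finite set, let F be a nonempty family of functions from X to [0,1] that is symmetric (f ∈ F implies 1 − f ∈ F), and let q_1, …, q_n ∈ Δ(X). Let C ⊆ ℝⁿ be a nonempty compact convex set with C ∩ Q_F = ∅. Then there exists h ∈ ℝⁿ with h ≥ 0 coordinatewise such that max_{v ∈ C} h·v < inf_{u ∈ Q_F} h·u. -/
open Finset Pointwise NNReal

/-- A probability mass function on a finite set: nonnegative and summing to `1`. -/
def IsPMF {X : Type*} [Fintype X] (p : X → ℝ) : Prop :=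
  (∀ x, 0 ≤ p x) ∧ ∑ x, p x = 1

/-- The surrogate semi-metric `d_F(p,q) = sup_{f ∈ F} (E_{x∼p}[f(x)] − E_{x∼q}[f(x)])`
for distributions on a finite set. -/
noncomputable def dF {X : Type*} [Fintype X] (F : Set (X → ℝ)) (p q : X → ℝ) : ℝ :=
  ⨆ f : F, (∑ x, p x * f.1 x - ∑ x, q x * f.1 x)

/-- The set `Q_F` of `F`-distance dominating vectors. -/
def QF {X : Type*} [Fintype X] (F : Set (X → ℝ)) {n : ℕ} (q : Fin n → X → ℝ) :
    Set (Fin n → ℝ) :=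
  {v | ∃ p : X → ℝ, IsPMF p ∧ ∀ i, dF F p (q i) ≤ v i}

section Aux

variable {X : Type*} [Fintype X] {F : Set (X → ℝ)}

lemma abs_f_le (hFrange : ∀ f ∈ F, ∀ x, f x ∈ Set.Icc (0:ℝ) 1) (f : F) (x : X) :
    |f.1 x| ≤ 1 := by
  have h := hFrange f.1 f.2 x
  exact abs_le.mpr ⟨by linarith [h.1], h.2⟩

lemma dF_bddAbove (hFrange : ∀ f ∈ F, ∀ x, f x ∈ Set.Icc (0:ℝ) 1) (p q : X → ℝ) :
    BddAbove (Set.range fun f : F => (∑ x, p x * f.1 x - ∑ x, q x * f.1 x)) := by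
  refine ⟨∑ x, |p x| + ∑ x, |q x|, ?_⟩
  rintro _ ⟨f, rfl⟩
  show ∑ x, p x * f.1 x - ∑ x, q x * f.1 x ≤ ∑ x, |p x| + ∑ x, |q x|
  have h1 : ∑ x, p x * f.1 x ≤ ∑ x, |p x| := by
    refine Finset.sum_le_sum fun x _ => ?_
    calc p x * f.1 x ≤ |p x * f.1 x| := le_abs_self _
      _ = |p x| * |f.1 x| := abs_mul _ _
      _ ≤ |p x| * 1 := mul_le_mul_of_nonneg_left (abs_f_le hFrange f x) (abs_nonneg _)
      _ = |p x| := mul_one _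
  have h2 : -∑ x, |q x| ≤ ∑ x, q x * f.1 x := by
    have h3 : ∀ x : X, -|q x| ≤ q x * f.1 x := by
      intro x
      have habs : |q x * f.1 x| ≤ |q x| := by
        rw [abs_mul]
        calc |q x| * |f.1 x| ≤ |q x| * 1 :=
              mul_le_mul_of_nonneg_left (abs_f_le hFrange f x) (abs_nonneg _)
          _ = |q x| := mul_one _
      linarith [neg_abs_le (q x * f.1 x)]
    calc -∑ x, |q x| = ∑ x, -|q x| := by rw [Finset.sum_neg_distrib]
      _ ≤ ∑ x, q x * f.1 x := Finset.sum_le_sum fun x _ => h3 x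
  linarith

lemma dF_le (hFne : F.Nonempty) {p q : X → ℝ} {a : ℝ}
    (h : ∀ f : F, ∑ x, p x * f.1 x - ∑ x, q x * f.1 x ≤ a) : dF F p q ≤ a := by
  have : Nonempty F := hFne.to_subtype
  exact ciSup_le h

lemma le_dF (hFrange : ∀ f ∈ F, ∀ x, f x ∈ Set.Icc (0:ℝ) 1) (p q : X → ℝ) (f : F) :
    ∑ x, p x * f.1 x - ∑ x, q x * f.1 x ≤ dF F p q :=
  le_ciSup (dF_bddAbove hFrange p q) f

lemma QF_convex (hFne : F.Nonempty) (hFrange : ∀ f ∈ F, ∀ x, f x ∈ Set.Icc (0:ℝ) 1)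
    {n : ℕ} (q : Fin n → X → ℝ) : Convex ℝ (QF F q) := by
  rintro v1 ⟨p1, hp1, h1⟩ v2 ⟨p2, hp2, h2⟩ a b ha hb hab
  refine ⟨fun x => a * p1 x + b * p2 x,
    ⟨fun x => add_nonneg (mul_nonneg ha (hp1.1 x)) (mul_nonneg hb (hp2.1 x)), ?_⟩, ?_⟩
  · rw [Finset.sum_add_distrib, ← Finset.mul_sum, ← Finset.mul_sum, hp1.2, hp2.2]
    simpa using hab
  · intro i
    have : dF F (fun x => a * p1 x + b * p2 x) (q i)
        ≤ a * dF F p1 (q i) + b * dF F p2 (q i) := by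
      refine dF_le hFne fun f => ?_
      have e : ∑ x, (a * p1 x + b * p2 x) * f.1 x
          = a * ∑ x, p1 x * f.1 x + b * ∑ x, p2 x * f.1 x := by
        rw [Finset.mul_sum, Finset.mul_sum, ← Finset.sum_add_distrib]
        exact Finset.sum_congr rfl fun x _ => by ring
      have eq2 : ∑ x, q i x * f.1 x = a * ∑ x, q i x * f.1 x + b * ∑ x, q i x * f.1 x := by
        rw [← add_mul, hab, one_mul]
      have t1 := le_dF hFrange p1 (q i) f
      have t2 := le_dF hFrange p2 (q i) f
      rw [e, eq2]
      nlinarith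
    refine this.trans ?_
    have : a * dF F p1 (q i) + b * dF F p2 (q i) ≤ a * v1 i + b * v2 i := by
      have := h1 i; have := h2 i
      nlinarith
    simpa [Pi.smul_apply, smul_eq_mul] using this

lemma QF_upward {n : ℕ} {q : Fin n → X → ℝ} {v w : Fin n → ℝ}
    (hv : v ∈ QF F q) (h : ∀ i, v i ≤ w i) : w ∈ QF F q := by
  obtain ⟨p, hp, hle⟩ := hv
  exact ⟨p, hp, fun i => (hle i).trans (h i)⟩

lemma QF_nonempty [Nonempty X] {n : ℕ} (q : Fin n → X → ℝ) : (QF F q).Nonempty := by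
  have hcard : (0 : ℝ) < (Fintype.card X : ℝ) := by
    exact_mod_cast Fintype.card_pos
  refine ⟨fun i => dF F (fun _ => (Fintype.card X : ℝ)⁻¹) (q i),
    fun _ => (Fintype.card X : ℝ)⁻¹, ⟨fun _ => by positivity, ?_⟩, fun i => le_rfl⟩
  rw [Finset.sum_const, nsmul_eq_mul, Finset.card_univ]
  field_simp

lemma dF_sub_le (hFne : F.Nonempty) (hFrange : ∀ f ∈ F, ∀ x, f x ∈ Set.Icc (0:ℝ) 1)
    (p p' q : X → ℝ) : dF F p q - dF F p' q ≤ ∑ x, |p x - p' x| := by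
  rw [sub_le_iff_le_add]
  refine dF_le hFne fun f => ?_
  have h1 : ∑ x, p x * f.1 x - ∑ x, p' x * f.1 x ≤ ∑ x, |p x - p' x| := by
    rw [← Finset.sum_sub_distrib]
    refine Finset.sum_le_sum fun x _ => ?_
    calc p x * f.1 x - p' x * f.1 x = (p x - p' x) * f.1 x := by ring
      _ ≤ |(p x - p' x) * f.1 x| := le_abs_self _
      _ = |p x - p' x| * |f.1 x| := abs_mul _ _
      _ ≤ |p x - p' x| * 1 := mul_le_mul_of_nonneg_left (abs_f_le hFrange f x) (abs_nonneg _)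
      _ = |p x - p' x| := mul_one _
  have h2 := le_dF hFrange p' q f
  linarith

lemma dF_continuous (hFne : F.Nonempty) (hFrange : ∀ f ∈ F, ∀ x, f x ∈ Set.Icc (0:ℝ) 1)
    (q : X → ℝ) : Continuous (fun p : X → ℝ => dF F p q) := by
  have key : ∀ a b : X → ℝ, dF F a q - dF F b q ≤ (Fintype.card X : ℝ) * dist a b := by
    intro a b
    refine (dF_sub_le hFne hFrange a b q).trans ?_
    calc ∑ x, |a x - b x| ≤ ∑ _x : X, dist a b := by
          refine Finset.sum_le_sum fun x _ => ?_
          rw [← Real.dist_eq]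
          exact dist_le_pi_dist a b x
      _ = (Fintype.card X : ℝ) * dist a b := by
          rw [Finset.sum_const, nsmul_eq_mul, Finset.card_univ]
  have : LipschitzWith (Fintype.card X : ℝ≥0) (fun p : X → ℝ => dF F p q) := by
    refine LipschitzWith.of_dist_le_mul fun a b => ?_
    rw [Real.dist_eq]
    push_cast
    exact abs_sub_le_iff.mpr ⟨key a b, (key b a).trans (by rw [dist_comm])⟩
  exact this.continuous

lemma QF_closed (hFne : F.Nonempty) (hFrange : ∀ f ∈ F, ∀ x, f x ∈ Set.Icc (0:ℝ) 1)
    {n : ℕ} (q : Fin n → X → ℝ) : IsClosed (QF F q) := by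
  set P : Set (X → ℝ) := {p | IsPMF p} with hP
  set Φ : (X → ℝ) → (Fin n → ℝ) := fun p i => dF F p (q i) with hΦdef
  have hPclosed : IsClosed P := by
    have : P = (⋂ x, {p : X → ℝ | 0 ≤ p x}) ∩ {p | ∑ x, p x = 1} := by
      ext p; simp [hP, IsPMF, Set.mem_iInter]
    rw [this]
    exact (isClosed_iInter fun x => isClosed_le continuous_const (continuous_apply x)).inter
      (isClosed_eq (continuous_finset_sum _ fun x _ => continuous_apply x) continuous_const)
  have hPsub : P ⊆ Set.Icc 0 1 := by
    intro p hp
    refine ⟨fun x => hp.1 x, fun x => ?_⟩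
    have := Finset.single_le_sum (f := p) (fun y _ => hp.1 y) (Finset.mem_univ x)
    calc p x ≤ ∑ y, p y := this
      _ = 1 := hp.2
  have hPc : IsCompact P := isCompact_Icc.of_isClosed_subset hPclosed hPsub
  have hΦc : Continuous Φ := continuous_pi fun i => dF_continuous hFne hFrange (q i)
  have hK : IsCompact (Φ '' P) := hPc.image hΦc
  have hS : IsClosed {v : Fin n → ℝ | ∀ i, 0 ≤ v i} := by
    have : {v : Fin n → ℝ | ∀ i, 0 ≤ v i} = Set.Ici 0 := by
      ext v; simp [Set.mem_Ici, Pi.le_def]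
    rw [this]; exact isClosed_Ici
  have hQeq : QF F q = (Φ '' P) + {v : Fin n → ℝ | ∀ i, 0 ≤ v i} := by
    ext v
    constructor
    · rintro ⟨p, hp, hle⟩
      refine Set.mem_add.mpr ⟨Φ p, ⟨p, hp, rfl⟩, v - Φ p, fun i => sub_nonneg.2 (hle i), by abel⟩
    · intro hv
      obtain ⟨w, ⟨p, hp, rfl⟩, s, hs, rfl⟩ := Set.mem_add.mp hv
      exact ⟨p, hp, fun i => le_add_of_nonneg_right (hs i)⟩
  rw [hQeq]
  exact hS.add_left_of_isCompact hK

end Aux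

/-- **Separation from `Q_F` with a nonnegative normal.** If `C ⊆ ℝⁿ` is a nonempty
compact convex set disjoint from `Q_F`, then there is `h ≥ 0` with
`max_{v ∈ C} h·v < inf_{u ∈ Q_F} h·u`. -/
theorem separation_nonneg_normal {X : Type*} [Fintype X] [Nonempty X]
    (F : Set (X → ℝ)) (hF : F.Nonempty)
    (hFrange : ∀ f ∈ F, ∀ x, f x ∈ Set.Icc (0:ℝ) 1)
    (hFsym : ∀ f ∈ F, (fun x => 1 - f x) ∈ F)
    (n : ℕ) (q : Fin n → X → ℝ) (hq : ∀ i, IsPMF (q i))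
    (C : Set (Fin n → ℝ)) (hCne : C.Nonempty) (hCcomp : IsCompact C)
    (hCconv : Convex ℝ C) (hdisj : C ∩ QF F q = ∅) :
    ∃ h : Fin n → ℝ, (∀ i, 0 ≤ h i) ∧
      (⨆ v : C, ∑ i, h i * v.1 i) < ⨅ u : QF F q, ∑ i, h i * u.1 i := by
  have hQconv : Convex ℝ (QF F q) := QF_convex hF hFrange q
  have hQclosed : IsClosed (QF F q) := QF_closed hF hFrange q
  have hQne : (QF F q).Nonempty := QF_nonempty q
  obtain ⟨f, α, β, hfa, hab, hfb⟩ :=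
    geometric_hahn_banach_compact_closed hCconv hCcomp hQconv hQclosed
      (Set.disjoint_iff_inter_eq_empty.mpr hdisj)
  set h : Fin n → ℝ := fun i => f (Pi.single i (1:ℝ)) with hh
  have hf_eq : ∀ a : Fin n → ℝ, f a = ∑ i, h i * a i := by
    intro a
    have ha : a = ∑ i, a i • (Pi.single i 1 : Fin n → ℝ) := by
      have : ∀ i, a i • (Pi.single i 1 : Fin n → ℝ) = Pi.single i (a i) := by
        intro i
        ext j
        simp [Pi.single_apply, mul_comm]
      rw [Finset.sum_congr rfl fun i _ => this i, Finset.univ_sum_single]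
    conv_lhs => rw [ha]
    rw [map_sum]
    exact Finset.sum_congr rfl fun i _ => by
      rw [map_smul, smul_eq_mul, hh]
      exact mul_comm _ _
  have hnn : ∀ i, 0 ≤ h i := by
    intro i
    by_contra hneg
    push_neg at hneg
    obtain ⟨u0, hu0⟩ := hQne
    have hfu0 : β < f u0 := hfb u0 hu0
    have hbne : (-h i) ≠ 0 := ne_of_gt (neg_pos.2 hneg)
    have hdiv : 0 ≤ (f u0 - β) / (-h i) := div_nonneg (by linarith) (by linarith)
    set t : ℝ := (f u0 - β) / (-h i) + 1 with ht
    have htpos : 0 ≤ t := by rw [ht]; linarith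
    have hmem : u0 + t • (Pi.single i 1 : Fin n → ℝ) ∈ QF F q := by
      refine QF_upward hu0 fun j => ?_
      have : 0 ≤ (t • (Pi.single i 1 : Fin n → ℝ)) j := by
        simp only [Pi.smul_apply, smul_eq_mul, Pi.single_apply]
        by_cases hji : j = i <;> simp [hji, htpos]
      have hgoal : u0 j ≤ u0 j + (t • (Pi.single i 1 : Fin n → ℝ)) j :=
        le_add_of_nonneg_right this
      simpa using hgoal
    have hlt := hfb _ hmem
    rw [map_add, map_smul, smul_eq_mul] at hlt
    have hdm : (f u0 - β) / (-h i) * (-h i) = f u0 - β := div_mul_cancel₀ _ hbne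
    have hsign : (f u0 - β) / (-h i) * h i = -((f u0 - β) / (-h i) * (-h i)) := by ring
    have hth : t * h i = -(f u0 - β) + h i := by
      rw [ht, add_mul, one_mul, hsign, hdm]
    have : f (Pi.single i (1:ℝ)) = h i := rfl
    rw [this] at hlt
    linarith
  refine ⟨h, hnn, ?_⟩
  have hCne' : Nonempty C := hCne.to_subtype
  have hQne' : Nonempty (QF F q) := hQne.to_subtype
  have h1 : (⨆ v : C, ∑ i, h i * v.1 i) ≤ α := by
    refine ciSup_le fun a => ?_
    rw [← hf_eq a.1]
    exact (hfa a.1 a.2).le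
  have h2 : β ≤ ⨅ u : QF F q, ∑ i, h i * u.1 i := by
    refine le_ciInf fun b => ?_
    rw [← hf_eq b.1]
    exact (hfb b.1 b.2).le
  calc (⨆ v : C, ∑ i, h i * v.1 i) ≤ α := h1
    _ < β := hab
    _ ≤ _ := h2
end

section
/- (Progress lemma.) Let X be a nonempty finite set, let q_1, …, q_n ∈ Δ(X), and let y ∈ ℝⁿ with y ∉ Q_TV. Then there exist n functions F_1, …, F_n : X → [0,1] and coefficients h_1, …, h_n ≥ 0 with Σ_i h_i = 1 such that for every probability distribution p on X, the vector z = z(p) defined by z_i = E_{x∼p}[F_i(x)] − E_{x∼q_i}[F_i(x)] satisfies: (1) Σ_i h_i (z_i − y_i) > 0, and (2) z_i ≤ TV(p, q_i) for all i. Moreover the functions F_i and coefficients h_i depend only on q_1, …, q_n and y. -/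
open Finset Pointwise

/-- Total variation distance between two distributions on a finite set:
`TV(p,q) = max_{A ⊆ X} |p(A) − q(A)|`. -/
noncomputable def tvFin {X : Type*} [Fintype X] (p q : X → ℝ) : ℝ :=
  ⨆ A : Finset X, |∑ x ∈ A, (p x - q x)|

/-- `Q_TV`: the set of vectors dominating the TV-distance vector
`(TV(p,q_1), …, TV(p,q_n))` of some probability distribution `p`. -/
def QTV {X : Type*} [Fintype X] {n : ℕ} (q : Fin n → X → ℝ) : Set (Fin n → ℝ) :=
  {v | ∃ p : X → ℝ, IsPMF p ∧ ∀ i, tvFin p (q i) ≤ v i}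

/-- One-sided formula for the total variation distance. -/
noncomputable def TV1 {X : Type*} [Fintype X] (qq p : X → ℝ) : ℝ :=
  ∑ x, max (p x - qq x) 0

lemma tvFin_eq_TV1 {X : Type*} [Fintype X] {p qq : X → ℝ}
    (hp : IsPMF p) (hqq : IsPMF qq) : tvFin p qq = TV1 qq p := by
  classical
  have hsum0 : ∑ x, (p x - qq x) = 0 := by
    rw [Finset.sum_sub_distrib, hp.2, hqq.2]; ring
  have hM0 : 0 ≤ TV1 qq p := Finset.sum_nonneg fun x _ => le_max_right _ _
  have hle : ∀ A : Finset X, ∑ x ∈ A, (p x - qq x) ≤ TV1 qq p := by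
    intro A
    calc ∑ x ∈ A, (p x - qq x) ≤ ∑ x ∈ A, max (p x - qq x) 0 :=
          Finset.sum_le_sum fun x _ => le_max_left _ _
      _ ≤ TV1 qq p := Finset.sum_le_sum_of_subset_of_nonneg (Finset.subset_univ A)
          (fun x _ _ => le_max_right _ _)
  apply le_antisymm
  · apply ciSup_le
    intro A
    rw [abs_le]
    refine ⟨?_, hle A⟩
    have h1 : (∑ x ∈ A, (p x - qq x)) + ∑ x ∈ Aᶜ, (p x - qq x) = 0 := by
      rw [Finset.sum_add_sum_compl]; exact hsum0
    have h2 := hle Aᶜ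
    linarith
  · have hA : ∑ x ∈ Finset.univ.filter (fun x => 0 < p x - qq x), (p x - qq x) = TV1 qq p := by
      rw [Finset.sum_filter]
      unfold TV1
      apply Finset.sum_congr rfl
      intro x _
      by_cases hx : 0 < p x - qq x
      · simp [hx, max_eq_left hx.le]
      · simp [hx, max_eq_right (not_lt.mp hx)]
    have hb : BddAbove (Set.range fun A : Finset X => |∑ x ∈ A, (p x - qq x)|) :=
      (Set.finite_range _).bddAbove
    have h3 := le_ciSup hb (Finset.univ.filter (fun x => 0 < p x - qq x))
    rw [hA, abs_of_nonneg hM0] at h3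
    exact h3

lemma sum_mul_le_TV1 {X : Type*} [Fintype X] {p qq F : X → ℝ}
    (hF : ∀ x, F x ∈ Set.Icc (0:ℝ) 1) :
    ∑ x, (p x - qq x) * F x ≤ TV1 qq p := by
  apply Finset.sum_le_sum
  intro x _
  rcases le_or_gt (p x - qq x) 0 with hx | hx
  · exact le_trans (mul_nonpos_of_nonpos_of_nonneg hx (hF x).1) (le_max_right _ _)
  · calc (p x - qq x) * F x ≤ (p x - qq x) * 1 :=
        mul_le_mul_of_nonneg_left (hF x).2 hx.le
      _ = p x - qq x := mul_one _
      _ ≤ max (p x - qq x) 0 := le_max_left _ _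

lemma sum_affine {κ : Type*} [Fintype κ] (c f g : κ → ℝ) (a b : ℝ) :
    ∑ j, c j * (a * f j + b * g j) = a * ∑ j, c j * f j + b * ∑ j, c j * g j := by
  rw [Finset.mul_sum, Finset.mul_sum, ← Finset.sum_add_distrib]
  exact Finset.sum_congr rfl fun j _ => by ring

/-- Separation of a point from a closed convex upward-closed set by a nonnegative functional. -/
lemma farkas_sep {ι : Type*} [Fintype ι] {S : Set (ι → ℝ)} (hconv : Convex ℝ S)
    (hcl : IsClosed S)
    (hup : ∀ v ∈ S, ∀ w : ι → ℝ, (∀ i, v i ≤ w i) → w ∈ S)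
    {v₀ : ι → ℝ} (hv₀ : v₀ ∈ S) {t : ι → ℝ} (ht : t ∉ S) :
    ∃ (c : ι → ℝ) (u : ℝ), (∀ i, 0 ≤ c i) ∧ 0 < ∑ i, c i ∧
      (∑ i, c i * t i) < u ∧ ∀ v ∈ S, u < ∑ i, c i * v i := by
  classical
  obtain ⟨f, u, hft, hfS⟩ := geometric_hahn_banach_point_closed hconv hcl ht
  set c : ι → ℝ := fun i => f (Pi.single i 1) with hc
  have hf : ∀ v : ι → ℝ, f v = ∑ i, c i * v i := by
    intro v
    have hv : ∑ i, (v i) • (Pi.single i (1:ℝ) : ι → ℝ) = v := by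
      calc ∑ i, (v i) • (Pi.single i (1:ℝ) : ι → ℝ)
          = ∑ i, Pi.single i (v i) := by
            apply Finset.sum_congr rfl
            intro i _
            rw [← Pi.single_smul, smul_eq_mul, mul_one]
        _ = v := Finset.univ_sum_single v
    conv_lhs => rw [← hv]
    rw [map_sum]
    apply Finset.sum_congr rfl
    intro i _
    rw [map_smul, smul_eq_mul, mul_comm]
  have hcnn : ∀ i, 0 ≤ c i := by
    intro i
    by_contra hci
    push_neg at hci
    have hci' : 0 < -(c i) := by linarith
    set tt := (f v₀ - u + 1) / (-(c i)) with htt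
    have hv₀u := hfS v₀ hv₀
    have httpos : 0 ≤ tt := by
      apply div_nonneg _ hci'.le
      linarith
    have hw : v₀ + tt • (Pi.single i (1:ℝ) : ι → ℝ) ∈ S := by
      apply hup v₀ hv₀
      intro j
      simp only [Pi.add_apply, Pi.smul_apply, smul_eq_mul]
      have h0 : 0 ≤ tt * (Pi.single i (1:ℝ) : ι → ℝ) j := by
        apply mul_nonneg httpos
        rw [Pi.single_apply]
        split <;> norm_num
      linarith
    have h2 := hfS _ hw
    rw [map_add, map_smul, smul_eq_mul] at h2
    have hcan : tt * (-(c i)) = f v₀ - u + 1 := div_mul_cancel₀ _ hci'.ne'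
    have hring : tt * (-(c i)) = -(tt * c i) := by ring
    linarith
  have hspos : 0 < ∑ i, c i := by
    rcases (Finset.sum_nonneg fun i _ => hcnn i).lt_or_eq with h | h
    · exact h
    · exfalso
      have hall : ∀ i ∈ Finset.univ, c i = 0 :=
        (Finset.sum_eq_zero_iff_of_nonneg (fun i _ => hcnn i)).mp h.symm
      have h1 : f t = 0 := by
        rw [hf]
        apply Finset.sum_eq_zero
        intro i hi; rw [hall i hi, zero_mul]
      have h2 : f v₀ = 0 := by
        rw [hf]
        apply Finset.sum_eq_zero
        intro i hi; rw [hall i hi, zero_mul]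
      have := hfS v₀ hv₀
      linarith
  refine ⟨c, u, hcnn, hspos, ?_, ?_⟩
  · rw [← hf]; exact hft
  · intro v hv; rw [← hf]; exact hfS v hv

lemma isClosed_upSet {ι E : Type*} [Fintype ι] [TopologicalSpace E]
    {K : Set E} (hK : IsCompact K) {Φ : E → ι → ℝ} (hΦ : Continuous Φ) :
    IsClosed {w : ι → ℝ | ∃ p ∈ K, ∀ i, Φ p i ≤ w i} := by
  have hO : IsClosed {w : ι → ℝ | ∀ i, 0 ≤ w i} := by
    have : {w : ι → ℝ | ∀ i, 0 ≤ w i} = Set.univ.pi fun _ => Set.Ici (0:ℝ) := by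
      ext w; simp [Set.mem_pi, Set.mem_Ici, Pi.le_def]
    rw [this]
    exact isClosed_set_pi fun i _ => isClosed_Ici
  have heq : {w : ι → ℝ | ∃ p ∈ K, ∀ i, Φ p i ≤ w i}
      = (Φ '' K) + {w : ι → ℝ | ∀ i, 0 ≤ w i} := by
    ext w
    constructor
    · rintro ⟨p, hp, hle⟩
      rw [Set.mem_add]
      refine ⟨Φ p, ⟨p, hp, rfl⟩, w - Φ p, fun i => ?_, by abel⟩
      simp only [Pi.sub_apply, sub_nonneg]
      exact hle i
    · rw [Set.mem_add]
      rintro ⟨a, ⟨p, hp, rfl⟩, b, hb, rfl⟩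
      refine ⟨p, hp, fun i => ?_⟩
      have := hb i
      simp only [Pi.add_apply]
      linarith
  rw [heq]
  exact IsClosed.add_left_of_isCompact hO (hK.image hΦ)

/-- **Progress lemma.** If `y ∉ Q_TV`, then there are functions `F_i : X → [0,1]` and
coefficients `h_i ≥ 0` with `Σ h_i = 1` (depending only on the `q_i` and `y`) such that
for every distribution `p`, the vector `z_i = E_p[F_i] − E_{q_i}[F_i]` satisfies
`Σ h_i (z_i − y_i) > 0` and `z_i ≤ TV(p, q_i)` for all `i`. -/
theorem progress_lemma {X : Type*} [Fintype X] [Nonempty X]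
    (n : ℕ) (q : Fin n → X → ℝ) (hq : ∀ i, IsPMF (q i))
    (y : Fin n → ℝ) (hy : y ∉ QTV q) :
    ∃ (F : Fin n → X → ℝ) (h : Fin n → ℝ),
      (∀ i x, F i x ∈ Set.Icc (0:ℝ) 1) ∧
      (∀ i, 0 ≤ h i) ∧ (∑ i, h i = 1) ∧
      ∀ p : X → ℝ, IsPMF p →
        (0 < ∑ i, h i * ((∑ x, p x * F i x - ∑ x, q i x * F i x) - y i)) ∧
        ∀ i, (∑ x, p x * F i x - ∑ x, q i x * F i x) ≤ tvFin p (q i) := by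
  classical
  -- the simplex is compact
  set Δ : Set (X → ℝ) := {p | IsPMF p} with hΔdef
  have hΔcompact : IsCompact Δ := by
    apply IsCompact.of_isClosed_subset
      (isCompact_univ_pi fun _ : X => isCompact_Icc (a := (0:ℝ)) (b := 1))
    · have : Δ = (⋂ x : X, {p : X → ℝ | 0 ≤ p x}) ∩ {p : X → ℝ | ∑ x, p x = 1} := by
        ext p
        simp [hΔdef, IsPMF, Set.mem_iInter]
      rw [this]
      apply IsClosed.inter
      · exact isClosed_iInter fun x => isClosed_le continuous_const (continuous_apply x)
      · exact isClosed_eq (continuous_finset_sum _ fun x _ => continuous_apply x) continuous_const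
    · intro p hp
      rw [Set.mem_univ_pi]
      intro x
      refine ⟨hp.1 x, ?_⟩
      calc p x ≤ ∑ x', p x' := Finset.single_le_sum (fun x' _ => hp.1 x') (Finset.mem_univ x)
        _ = 1 := hp.2
  -- convexity helper for max
  have hmax_ineq : ∀ (a b s t : ℝ), 0 ≤ a → 0 ≤ b →
      max (a*s + b*t) 0 ≤ a * max s 0 + b * max t 0 := by
    intro a b s t ha hb
    apply max_le
    · exact add_le_add (mul_le_mul_of_nonneg_left (le_max_left _ _) ha)
        (mul_le_mul_of_nonneg_left (le_max_left _ _) hb)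
    · exact add_nonneg (mul_nonneg ha (le_max_right _ _)) (mul_nonneg hb (le_max_right _ _))
  have hTV1conv : ∀ (qq p p' : X → ℝ) (a b : ℝ), 0 ≤ a → 0 ≤ b → a + b = 1 →
      TV1 qq (a • p + b • p') ≤ a * TV1 qq p + b * TV1 qq p' := by
    intro qq p p' a b ha hb hab
    unfold TV1
    rw [Finset.mul_sum, Finset.mul_sum, ← Finset.sum_add_distrib]
    apply Finset.sum_le_sum
    intro x _
    have hrw : (a • p + b • p') x - qq x = a * (p x - qq x) + b * (p' x - qq x) := by
      simp only [Pi.add_apply, Pi.smul_apply, smul_eq_mul]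
      linear_combination (qq x) * hab
    rw [hrw]
    exact hmax_ineq a b _ _ ha hb
  -- QTV is convex
  have hQconv : Convex ℝ (QTV q) := by
    intro w hw w' hw' a b ha hb hab
    obtain ⟨p, hp, hle⟩ := hw
    obtain ⟨p', hp', hle'⟩ := hw'
    have hpmix : IsPMF (a • p + b • p') := by
      constructor
      · intro x
        simp only [Pi.add_apply, Pi.smul_apply, smul_eq_mul]
        exact add_nonneg (mul_nonneg ha (hp.1 x)) (mul_nonneg hb (hp'.1 x))
      · simp only [Pi.add_apply, Pi.smul_apply, smul_eq_mul]
        rw [Finset.sum_add_distrib, ← Finset.mul_sum, ← Finset.mul_sum, hp.2, hp'.2]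
        simpa using hab
    refine ⟨a • p + b • p', hpmix, fun i => ?_⟩
    rw [tvFin_eq_TV1 hpmix (hq i)]
    calc TV1 (q i) (a • p + b • p') ≤ a * TV1 (q i) p + b * TV1 (q i) p' :=
          hTV1conv (q i) p p' a b ha hb hab
      _ = a * tvFin p (q i) + b * tvFin p' (q i) := by
          rw [tvFin_eq_TV1 hp (hq i), tvFin_eq_TV1 hp' (hq i)]
      _ ≤ a * w i + b * w' i := add_le_add (mul_le_mul_of_nonneg_left (hle i) ha)
          (mul_le_mul_of_nonneg_left (hle' i) hb)
      _ = (a • w + b • w') i := by simp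
  -- QTV is closed
  have hQeq : QTV q = {w : Fin n → ℝ | ∃ p ∈ Δ, ∀ i, TV1 (q i) p ≤ w i} := by
    ext w
    constructor
    · rintro ⟨p, hp, hle⟩
      exact ⟨p, hp, fun i => by rw [← tvFin_eq_TV1 hp (hq i)]; exact hle i⟩
    · rintro ⟨p, hp, hle⟩
      exact ⟨p, hp, fun i => by rw [tvFin_eq_TV1 hp (hq i)]; exact hle i⟩
  have hQclosed : IsClosed (QTV q) := by
    rw [hQeq]
    have hcont : Continuous (fun (p : X → ℝ) (i : Fin n) => TV1 (q i) p) := by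
      apply continuous_pi
      intro i
      unfold TV1
      exact continuous_finset_sum _ fun x _ =>
        ((continuous_apply x).sub continuous_const).max continuous_const
    exact isClosed_upSet hΔcompact hcont
  -- QTV is upward closed and nonempty
  have hQup : ∀ v ∈ QTV q, ∀ w : Fin n → ℝ, (∀ i, v i ≤ w i) → w ∈ QTV q := by
    rintro v ⟨p, hp, hle⟩ w hvw
    exact ⟨p, hp, fun i => le_trans (hle i) (hvw i)⟩
  have hcard : (0:ℝ) < (Fintype.card X : ℝ) := by
    have := Fintype.card_pos (α := X)
    exact_mod_cast this
  have hp₀ : IsPMF (fun _ : X => (Fintype.card X : ℝ)⁻¹) := by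
    constructor
    · intro x; positivity
    · rw [Finset.sum_const, Finset.card_univ, nsmul_eq_mul, mul_inv_cancel₀ hcard.ne']
  have hv₀ : (fun i => tvFin (fun _ : X => (Fintype.card X : ℝ)⁻¹) (q i)) ∈ QTV q :=
    ⟨_, hp₀, fun i => le_refl _⟩
  -- first separation: get the coefficients h
  obtain ⟨c, u, hcnn, hcpos, hcy, hcS⟩ := farkas_sep hQconv hQclosed hQup hv₀ hy
  set s : ℝ := ∑ i, c i with hs
  set h : Fin n → ℝ := fun i => c i / s with hh
  set u' : ℝ := u / s with hu'
  have hhnn : ∀ i, 0 ≤ h i := fun i => div_nonneg (hcnn i) hcpos.le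
  have hh1 : ∑ i, h i = 1 := by
    rw [hh, ← Finset.sum_div, ← hs, div_self hcpos.ne']
  have hdiv : ∀ v : Fin n → ℝ, (∑ i, c i * v i) / s = ∑ i, h i * v i := by
    intro v
    rw [Finset.sum_div]
    exact Finset.sum_congr rfl fun i _ => by rw [hh]; ring
  have hyu' : ∑ i, h i * y i < u' := by
    rw [← hdiv, hu']
    exact (div_lt_div_iff_of_pos_right hcpos).mpr hcy
  have hpT : ∀ p : X → ℝ, IsPMF p → u' < ∑ i, h i * TV1 (q i) p := by
    intro p hp
    have h1 := hcS (fun i => tvFin p (q i)) ⟨p, hp, fun i => le_refl _⟩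
    have h2 : u < ∑ i, c i * TV1 (q i) p := by
      calc u < ∑ i, c i * tvFin p (q i) := h1
        _ = ∑ i, c i * TV1 (q i) p :=
          Finset.sum_congr rfl fun i _ => by rw [tvFin_eq_TV1 hp (hq i)]
    rw [← hdiv, hu']
    exact (div_lt_div_iff_of_pos_right hcpos).mpr h2
  -- second separation space
  set W : (Fin n → X → ℝ) → X → ℝ :=
    fun F x => (∑ i, h i * F i x) - ∑ i, h i * (∑ x', q i x' * F i x') with hWdef
  set Kc : Set (Fin n → X → ℝ) := {F | ∀ i x, F i x ∈ Set.Icc (0:ℝ) 1} with hKcdef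
  -- sum swap identity
  have hswap : ∀ pr : X → ℝ, (∑ x, pr x) = 1 → ∀ F : Fin n → X → ℝ,
      ∑ x, pr x * W F x = ∑ i, h i * ((∑ x, pr x * F i x) - ∑ x, q i x * F i x) := by
    intro pr hpr F
    calc ∑ x, pr x * W F x
        = ∑ x, ∑ i, (pr x * (h i * F i x) - pr x * (h i * (∑ x', q i x' * F i x'))) := by
          apply Finset.sum_congr rfl
          intro x _
          simp only [hWdef]
          rw [mul_sub, Finset.mul_sum, Finset.mul_sum, ← Finset.sum_sub_distrib]
      _ = ∑ i, ∑ x, (pr x * (h i * F i x) - pr x * (h i * (∑ x', q i x' * F i x'))) :=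
          Finset.sum_comm
      _ = ∑ i, ((∑ x, pr x * (h i * F i x)) - (∑ x, pr x) * (h i * (∑ x', q i x' * F i x'))) := by
          apply Finset.sum_congr rfl
          intro i _
          rw [Finset.sum_sub_distrib, ← Finset.sum_mul]
      _ = ∑ i, h i * ((∑ x, pr x * F i x) - ∑ x, q i x * F i x) := by
          apply Finset.sum_congr rfl
          intro i _
          rw [hpr, one_mul, mul_sub]
          congr 1
          rw [Finset.mul_sum]
          exact Finset.sum_congr rfl fun x _ => by ring
  -- existence of good F via second separation
  have hFexists : ∃ F ∈ Kc, ∀ x, u' ≤ W F x := by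
    by_contra hno
    push_neg at hno
    set Sneg : Set (X → ℝ) := {w | ∃ F ∈ Kc, ∀ x, -(W F x) ≤ w x} with hSnegdef
    have htnot : (fun _ : X => -u') ∉ Sneg := by
      rintro ⟨F, hF, hle⟩
      obtain ⟨x, hx⟩ := hno F hF
      have := hle x
      simp only at this
      linarith
    have h0K : (0 : Fin n → X → ℝ) ∈ Kc := by
      intro i x
      simp [Set.mem_Icc]
    have hW0 : ∀ x, W 0 x = 0 := by
      intro x
      simp [hWdef]
    have h0mem : (0 : X → ℝ) ∈ Sneg := by
      refine ⟨0, h0K, fun x => ?_⟩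
      simp [hW0 x]
    have hKcompact : IsCompact Kc := by
      have : Kc = Set.univ.pi fun _ : Fin n => Set.univ.pi fun _ : X => Set.Icc (0:ℝ) 1 := by
        ext F
        simp [hKcdef, Set.mem_pi, Set.mem_Icc, Pi.le_def, forall_and]
      rw [this]
      exact isCompact_univ_pi fun _ => isCompact_univ_pi fun _ => isCompact_Icc
    have hWcont : Continuous fun F : Fin n → X → ℝ => fun x => -(W F x) := by
      apply continuous_pi
      intro x
      apply Continuous.neg
      simp only [hWdef]
      apply Continuous.sub
      · exact continuous_finset_sum _ fun i _ =>
          continuous_const.mul ((continuous_apply x).comp (continuous_apply i))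
      · exact continuous_finset_sum _ fun i _ =>
          continuous_const.mul (continuous_finset_sum _ fun x' _ =>
            continuous_const.mul ((continuous_apply x').comp (continuous_apply i)))
    have hSnegclosed : IsClosed Sneg := by
      rw [hSnegdef]
      exact isClosed_upSet hKcompact hWcont
    have hWmix : ∀ (a b : ℝ) (F G : Fin n → X → ℝ) (x : X),
        W (a • F + b • G) x = a * W F x + b * W G x := by
      intro a b F G x
      simp only [hWdef, Pi.add_apply, Pi.smul_apply, smul_eq_mul]
      have h1 : ∑ i, h i * (a * F i x + b * G i x)
          = a * ∑ i, h i * F i x + b * ∑ i, h i * G i x :=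
        sum_affine h (fun i => F i x) (fun i => G i x) a b
      have h2 : ∑ i, h i * (∑ x', q i x' * (a * F i x' + b * G i x'))
          = a * (∑ i, h i * ∑ x', q i x' * F i x')
            + b * (∑ i, h i * ∑ x', q i x' * G i x') := by
        calc ∑ i, h i * (∑ x', q i x' * (a * F i x' + b * G i x'))
            = ∑ i, h i * (a * (∑ x', q i x' * F i x') + b * (∑ x', q i x' * G i x')) :=
              Finset.sum_congr rfl fun i _ =>
                congrArg (fun t => h i * t)
                  (sum_affine (q i) (fun x' => F i x') (fun x' => G i x') a b)
          _ = a * (∑ i, h i * ∑ x', q i x' * F i x')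
              + b * (∑ i, h i * ∑ x', q i x' * G i x') :=
              sum_affine h (fun i => ∑ x', q i x' * F i x')
                (fun i => ∑ x', q i x' * G i x') a b
      rw [h1, h2]
      ring
    have hSnegconv : Convex ℝ Sneg := by
      intro w hw w' hw' a b ha hb hab
      obtain ⟨F, hF, hle⟩ := hw
      obtain ⟨G, hG, hle'⟩ := hw'
      refine ⟨a • F + b • G, ?_, fun x => ?_⟩
      · intro i x
        simp only [Pi.add_apply, Pi.smul_apply, smul_eq_mul]
        constructor
        · exact add_nonneg (mul_nonneg ha (hF i x).1) (mul_nonneg hb (hG i x).1)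
        · calc a * F i x + b * G i x ≤ a * 1 + b * 1 :=
              add_le_add (mul_le_mul_of_nonneg_left (hF i x).2 ha)
                (mul_le_mul_of_nonneg_left (hG i x).2 hb)
            _ = 1 := by rw [mul_one, mul_one, hab]
      · simp only [Pi.add_apply, Pi.smul_apply, smul_eq_mul]
        have h1 := hle x
        have h2 := hle' x
        have h3 : -(W (a • F + b • G) x) = a * (-(W F x)) + b * (-(W G x)) := by
          rw [hWmix]; ring
        rw [h3]
        exact add_le_add (mul_le_mul_of_nonneg_left h1 ha)
          (mul_le_mul_of_nonneg_left h2 hb)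
    have hSnegup : ∀ v ∈ Sneg, ∀ w : X → ℝ, (∀ x, v x ≤ w x) → w ∈ Sneg := by
      rintro v ⟨F, hF, hle⟩ w hvw
      exact ⟨F, hF, fun x => le_trans (hle x) (hvw x)⟩
    obtain ⟨m, u₂, hmnn, hmpos, hmt, hmS⟩ :=
      farkas_sep hSnegconv hSnegclosed hSnegup h0mem htnot
    -- normalize m into a PMF
    set sm : ℝ := ∑ x, m x with hsm
    set pp : X → ℝ := fun x => m x / sm with hpp
    have hppPMF : IsPMF pp := by
      constructor
      · intro x; exact div_nonneg (hmnn x) hmpos.le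
      · rw [hpp, ← Finset.sum_div, ← hsm, div_self hmpos.ne']
    -- the optimal indicator functions
    set Fs : Fin n → X → ℝ := fun i x => if 0 < pp x - q i x then 1 else 0 with hFs
    have hFsK : Fs ∈ Kc := by
      intro i x
      simp only [hFs]
      split <;> simp [Set.mem_Icc]
    have hFsT : ∀ i, (∑ x, pp x * Fs i x) - ∑ x, q i x * Fs i x = TV1 (q i) pp := by
      intro i
      rw [← Finset.sum_sub_distrib]
      unfold TV1
      apply Finset.sum_congr rfl
      intro x _
      simp only [hFs]
      by_cases hx : 0 < pp x - q i x
      · simp only [hx, if_true, mul_one]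
        rw [max_eq_left hx.le]
      · simp only [hx, if_false, mul_zero, sub_zero]
        rw [max_eq_right (not_lt.mp hx)]
    have hkey := hmS (fun x => -(W Fs x)) ⟨Fs, hFsK, fun x => le_refl _⟩
    -- hkey : u₂ < ∑ x, m x * (-(W Fs x))
    have hmt' : sm * (-u') < u₂ := by
      calc sm * (-u') = ∑ x, m x * (-u') := by rw [← Finset.sum_mul, hsm]
        _ < u₂ := hmt
    have hsum1 : ∑ x, m x * (-(W Fs x)) = -(∑ x, m x * W Fs x) := by
      rw [← Finset.sum_neg_distrib]
      exact Finset.sum_congr rfl fun x _ => by ring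
    have hlt : ∑ x, m x * W Fs x < sm * u' := by
      rw [hsum1] at hkey
      linarith
    have hppW : ∑ x, pp x * W Fs x < u' := by
      have : ∑ x, pp x * W Fs x = (∑ x, m x * W Fs x) / sm := by
        rw [Finset.sum_div]
        exact Finset.sum_congr rfl fun x _ => by rw [hpp]; ring
      rw [this]
      rw [div_lt_iff₀ hmpos]
      linarith [hlt]
    have hcontr : ∑ i, h i * TV1 (q i) pp < u' := by
      have h4 := hswap pp hppPMF.2 Fs
      rw [h4] at hppW
      calc ∑ i, h i * TV1 (q i) pp
          = ∑ i, h i * ((∑ x, pp x * Fs i x) - ∑ x, q i x * Fs i x) :=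
            Finset.sum_congr rfl fun i _ => by rw [hFsT i]
        _ < u' := hppW
    have := hpT pp hppPMF
    linarith
  obtain ⟨F, hFK, hFge⟩ := hFexists
  refine ⟨F, h, hFK, hhnn, hh1, ?_⟩
  intro p hp
  constructor
  · -- positivity of the pairing
    have hWp : u' ≤ ∑ x, p x * W F x := by
      calc u' = ∑ x, p x * u' := by rw [← Finset.sum_mul, hp.2, one_mul]
        _ ≤ ∑ x, p x * W F x :=
          Finset.sum_le_sum fun x _ => mul_le_mul_of_nonneg_left (hFge x) (hp.1 x)
    have h4 := hswap p hp.2 F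
    rw [h4] at hWp
    have e1 : ∑ i, h i * ((∑ x, p x * F i x - ∑ x, q i x * F i x) - y i)
        = (∑ i, h i * ((∑ x, p x * F i x) - ∑ x, q i x * F i x)) - ∑ i, h i * y i := by
      rw [← Finset.sum_sub_distrib]
      exact Finset.sum_congr rfl fun i _ => by ring
    rw [e1]
    linarith
  · intro i
    rw [tvFin_eq_TV1 hp (hq i)]
    have e2 : (∑ x, p x * F i x) - ∑ x, q i x * F i x = ∑ x, (p x - q i x) * F i x := by
      rw [← Finset.sum_sub_distrib]
      exact Finset.sum_congr rfl fun x _ => by ring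
    rw [e2]
    exact sum_mul_le_TV1 (fun x => hFK i x)
end

section
/- (VC dimension of the thresholded-Yatracos family.) Let X be a set, let n ≥ 1, and let q_1, …, q_n : X → ℝ be arbitrary functions. For i ≠ j define S_{i,j} : X → {0,1} by S_{i,j}(x) = 1 if and only if q_i(x) ≥ q_j(x). For each i ∈ {1,…,n} let F_i = { { x ∈ X : Σ_{j ≠ i} h_j · S_{i,j}(x) ≥ c } : h_j ∈ ℝ for j ≠ i, c ∈ ℝ }, and let F = F_1 ∪ ⋯ ∪ F_n. Then the VC dimension of F is at most 10n (and moreover each F_i has VC dimension at most n). -/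
open Finset

/-- A family of subsets `C` shatters a finite set `S` if every subset of `S` is cut out
by a member of `C`. -/
def Shatters {X : Type*} (C : Set (Set X)) (S : Finset X) : Prop :=
  ∀ T ⊆ S, ∃ c ∈ C, c ∩ ↑S = (↑T : Set X)

/-- The Yatracos indicator `S_{i,j}(x) = 1` iff `q_i(x) ≥ q_j(x)`. -/
noncomputable def yatracosInd {X : Type*} {n : ℕ} (q : Fin n → X → ℝ)
    (i j : Fin n) (x : X) : ℝ :=
  if q j x ≤ q i x then 1 else 0

/-- The thresholded-Yatracos class
`F_i = { {x : Σ_{j ≠ i} h_j·S_{i,j}(x) ≥ c} : h ∈ ℝⁿ, c ∈ ℝ }`. -/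
noncomputable def thresholdFam {X : Type*} {n : ℕ} (q : Fin n → X → ℝ)
    (i : Fin n) : Set (Set X) :=
  {A | ∃ (h : Fin n → ℝ) (c : ℝ),
    A = {x | c ≤ ∑ j ∈ Finset.univ.erase i, h j * yatracosInd q i j x}}

lemma card_le_of_shatters_thresholdFam {X : Type*} {n : ℕ} (q : Fin n → X → ℝ)
    (i : Fin n) (S : Finset X) (hS : Shatters (thresholdFam q i) S) : S.card ≤ n := by
  classical
  by_contra hcard
  push_neg at hcard
  -- the augmented feature map
  set ψ : X → Fin n → ℝ := fun x j => if j = i then 1 else yatracosInd q i j x with hψ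
  have hdep : ¬ LinearIndependent ℝ (fun x : ↥S => ψ x) := by
    intro hli
    have := hli.fintype_card_le_finrank
    rw [Module.finrank_pi, Fintype.card_coe, Fintype.card_fin] at this
    omega
  rw [Fintype.not_linearIndependent_iff] at hdep
  obtain ⟨a, hsum, x0, hx0⟩ := hdep
  -- extend a to X
  set a' : X → ℝ := fun x => if h : x ∈ S then a ⟨x, h⟩ else 0 with ha'
  have ha'x : ∀ x : ↥S, a' (x : X) = a x := by
    intro x; simp [ha', x.2]
  have hcoord : ∀ j : Fin n, ∑ x ∈ S, a' x * ψ x j = 0 := by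
    intro j
    have := congrFun hsum j
    simp only [Finset.sum_apply, Pi.smul_apply, smul_eq_mul, Pi.zero_apply] at this
    rw [← this, ← Finset.sum_attach S (fun x => a' x * ψ x j)]
    exact Finset.sum_congr rfl fun x _ => by rw [ha'x]
  have hsum0 : ∑ x ∈ S, a' x = 0 := by
    have := hcoord i
    simpa [hψ] using this
  -- the positive part
  set T : Finset X := S.filter (fun x => 0 < a' x) with hT
  obtain ⟨A, hA, hAS⟩ := hS T (filter_subset _ _)
  obtain ⟨h, c, rfl⟩ := hA
  set f : X → ℝ := fun x => ∑ j ∈ Finset.univ.erase i, h j * yatracosInd q i j x with hf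
  have hpos : ∀ x ∈ S, 0 < a' x → c ≤ f x := by
    intro x hx hax
    have hxT : x ∈ T := by simp [hT, hx, hax]
    have : x ∈ ({x | c ≤ f x} ∩ ↑S : Set X) := by
      rw [hAS]; exact_mod_cast hxT
    exact this.1
  have hneg : ∀ x ∈ S, a' x < 0 → f x < c := by
    intro x hx hax
    by_contra hge
    push_neg at hge
    have : x ∈ ({x | c ≤ f x} ∩ ↑S : Set X) := ⟨hge, by exact_mod_cast hx⟩
    rw [hAS] at this
    have : x ∈ T := by exact_mod_cast this
    rw [hT, mem_filter] at this
    linarith [this.2]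
  have hfpsi : ∀ x, f x = ∑ j ∈ Finset.univ.erase i, h j * ψ x j := by
    intro x
    refine Finset.sum_congr rfl fun j hj => ?_
    rw [mem_erase] at hj
    simp [hψ, hj.1]
  have hsf : ∑ x ∈ S, a' x * f x = 0 := by
    calc ∑ x ∈ S, a' x * f x
        = ∑ x ∈ S, ∑ j ∈ Finset.univ.erase i, a' x * (h j * ψ x j) := by
          simp_rw [hfpsi, Finset.mul_sum]
      _ = ∑ j ∈ Finset.univ.erase i, ∑ x ∈ S, a' x * (h j * ψ x j) := Finset.sum_comm
      _ = ∑ j ∈ Finset.univ.erase i, h j * ∑ x ∈ S, a' x * ψ x j := by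
          refine Finset.sum_congr rfl fun j _ => ?_
          rw [Finset.mul_sum]
          refine Finset.sum_congr rfl fun x _ => by ring
      _ = 0 := by simp [hcoord]
  have key : ∑ x ∈ S, a' x * (f x - c) = 0 := by
    simp_rw [mul_sub]
    rw [Finset.sum_sub_distrib, hsf, ← Finset.sum_mul, hsum0]
    ring
  have hx0ne : a' (x0 : X) ≠ 0 := by rw [ha'x]; exact hx0
  have hx1 : ∃ x ∈ S, a' x < 0 := by
    by_contra hno
    push_neg at hno
    have hz := (Finset.sum_eq_zero_iff_of_nonneg (fun x hx => hno x hx)).mp hsum0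
    exact hx0ne (hz _ x0.2)
  obtain ⟨x1, hx1S, hx1neg⟩ := hx1
  have hposSum : 0 < ∑ x ∈ S, a' x * (f x - c) := by
    apply Finset.sum_pos'
    · intro x hx
      rcases lt_trichotomy (a' x) 0 with hlt | heq | hgt
      · have := hneg x hx hlt
        nlinarith
      · simp [heq]
      · have := hpos x hx hgt
        nlinarith
    · exact ⟨x1, hx1S, by nlinarith [hneg x1 hx1S hx1neg]⟩
  rw [key] at hposSum
  exact lt_irrefl _ hposSum


lemma succ_pow_le_three_mul_pow (n : ℕ) : ((n : ℝ) + 1) ^ n ≤ 3 * (n : ℝ) ^ n := by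
  rcases Nat.eq_zero_or_pos n with rfl | hn
  · norm_num
  have hnR : (0 : ℝ) < n := by exact_mod_cast hn
  have h1 : ((n : ℝ) + 1) ≤ n * Real.exp (1 / n) := by
    have := Real.add_one_le_exp (1 / (n : ℝ))
    have h2 : (n : ℝ) * (1 / n + 1) ≤ n * Real.exp (1 / n) := by
      apply mul_le_mul_of_nonneg_left this hnR.le
    rw [mul_add, mul_one_div, div_self hnR.ne'] at h2
    linarith
  have h3 : ((n : ℝ) + 1) ^ n ≤ ((n : ℝ) * Real.exp (1 / n)) ^ n := by
    apply pow_le_pow_left₀ (by positivity) h1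
  rw [mul_pow, ← Real.exp_nat_mul] at h3
  have h4 : (n : ℝ) * (1 / n) = 1 := by field_simp
  rw [h4] at h3
  have h5 : Real.exp 1 ≤ 3 := by
    have := Real.exp_one_lt_d9
    linarith
  calc ((n : ℝ) + 1) ^ n ≤ (n : ℝ) ^ n * Real.exp 1 := h3
    _ ≤ (n : ℝ) ^ n * 3 := by
        apply mul_le_mul_of_nonneg_left h5 (by positivity)
    _ = 3 * (n : ℝ) ^ n := by ring

lemma pow_self_le_three_pow_mul_factorial (n : ℕ) :
    ((n : ℝ)) ^ n ≤ 3 ^ n * (n.factorial : ℝ) := by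
  induction n with
  | zero => norm_num
  | succ n ih =>
    have h1 : ((n : ℝ) + 1) ^ n ≤ 3 * (n : ℝ) ^ n := succ_pow_le_three_mul_pow n
    have hnn : (0 : ℝ) ≤ (n : ℝ) + 1 := by positivity
    calc ((n + 1 : ℕ) : ℝ) ^ (n + 1) = ((n : ℝ) + 1) * ((n : ℝ) + 1) ^ n := by
          push_cast; ring
      _ ≤ ((n : ℝ) + 1) * (3 * (n : ℝ) ^ n) := by
          apply mul_le_mul_of_nonneg_left h1 hnn
      _ ≤ ((n : ℝ) + 1) * (3 * (3 ^ n * (n.factorial : ℝ))) := by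
          apply mul_le_mul_of_nonneg_left _ hnn
          apply mul_le_mul_of_nonneg_left ih (by norm_num)
      _ = 3 ^ (n + 1) * (((n : ℝ) + 1) * n.factorial) := by ring
      _ = 3 ^ (n + 1) * ((n + 1).factorial : ℝ) := by
          rw [Nat.factorial_succ]; push_cast; ring

-- geometric-type growth of binomial coefficients for m = 10n+1
lemma nine_pow_mul_choose_le (n : ℕ) : ∀ d ≤ n,
    9 ^ d * (10 * n + 1).choose (n - d) ≤ (10 * n + 1).choose n := by
  intro d
  induction d with
  | zero => simp
  | succ d ih =>
    intro hd
    have hdn : d ≤ n := by omega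
    have key : 9 * (10 * n + 1).choose (n - (d + 1)) ≤ (10 * n + 1).choose (n - d) := by
      set k := n - (d + 1) with hk
      have hkd : n - d = k + 1 := by omega
      rw [hkd]
      have h1 : (10 * n + 1).choose (k + 1) * (k + 1) =
          (10 * n + 1).choose k * (10 * n + 1 - k) := Nat.choose_succ_right_eq _ _
      have h2 : 9 * (k + 1) ≤ 10 * n + 1 - k := by omega
      have h3 : 9 * (10 * n + 1).choose k * (k + 1) ≤ (10 * n + 1).choose (k + 1) * (k + 1) := by
        rw [h1]
        calc 9 * (10 * n + 1).choose k * (k + 1) = (10 * n + 1).choose k * (9 * (k + 1)) := by ring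
          _ ≤ (10 * n + 1).choose k * (10 * n + 1 - k) :=
              Nat.mul_le_mul_left _ h2
      exact Nat.le_of_mul_le_mul_right h3 (Nat.succ_pos k)
    calc 9 ^ (d + 1) * (10 * n + 1).choose (n - (d + 1))
        = 9 ^ d * (9 * (10 * n + 1).choose (n - (d + 1))) := by ring
      _ ≤ 9 ^ d * (10 * n + 1).choose (n - d) := Nat.mul_le_mul_left _ key
      _ ≤ (10 * n + 1).choose n := ih hdn

lemma sum_choose_le_two_mul (n : ℕ) :
    (∑ k ∈ range (n + 1), ((10 * n + 1).choose k : ℝ)) ≤ 2 * ((10 * n + 1).choose n : ℝ) := by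
  have hterm : ∀ k ≤ n, ((10 * n + 1).choose k : ℝ) ≤
      ((10 * n + 1).choose n : ℝ) * (1 / 9) ^ (n - k) := by
    intro k hk
    have := nine_pow_mul_choose_le n (n - k) (Nat.sub_le _ _)
    have hnk : n - (n - k) = k := by omega
    rw [hnk] at this
    have hR : (9 : ℝ) ^ (n - k) * ((10 * n + 1).choose k : ℝ) ≤ ((10 * n + 1).choose n : ℝ) := by
      exact_mod_cast this
    have h9 : (0 : ℝ) < 9 ^ (n - k) := by positivity
    calc ((10 * n + 1).choose k : ℝ)
        = ((10 * n + 1).choose k : ℝ) * 9 ^ (n - k) * (1 / 9) ^ (n - k) := by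
          rw [mul_assoc, ← mul_pow]; norm_num
      _ ≤ ((10 * n + 1).choose n : ℝ) * (1 / 9) ^ (n - k) := by
          apply mul_le_mul_of_nonneg_right (by linarith) (by positivity)

  calc (∑ k ∈ range (n + 1), ((10 * n + 1).choose k : ℝ))
      ≤ ∑ k ∈ range (n + 1), ((10 * n + 1).choose n : ℝ) * (1 / 9) ^ (n - k) := by
        apply Finset.sum_le_sum
        intro k hk
        exact hterm k (by simpa using Nat.lt_succ_iff.mp (mem_range.mp hk))
    _ = ((10 * n + 1).choose n : ℝ) * ∑ k ∈ range (n + 1), (1 / 9 : ℝ) ^ (n - k) := by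
        rw [Finset.mul_sum]
    _ ≤ ((10 * n + 1).choose n : ℝ) * 2 := by
        apply mul_le_mul_of_nonneg_left _ (by positivity)
        have hre : ∑ k ∈ range (n + 1), (1 / 9 : ℝ) ^ (n - k)
            = ∑ j ∈ range (n + 1), (1 / 9 : ℝ) ^ j := by
          have := Finset.sum_range_reflect (fun j => (1 / 9 : ℝ) ^ j) (n + 1)
          simpa using this
        rw [hre]
        have hgeom := geom_sum_eq (by norm_num : (1 / 9 : ℝ) ≠ 1) (n + 1)
        rw [hgeom]
        have hp : (0 : ℝ) ≤ (1 / 9 : ℝ) ^ (n + 1) := by positivity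
        rw [div_le_iff_of_neg (by norm_num : (1 / 9 : ℝ) - 1 < 0)]
        linarith
    _ = 2 * ((10 * n + 1).choose n : ℝ) := by ring

lemma choose_le_33_pow (n : ℕ) (hn : 1 ≤ n) :
    (((10 * n + 1).choose n : ℕ) : ℝ) ≤ 33 ^ n := by
  have h1 : (n.factorial : ℝ) * ((10 * n + 1).choose n : ℝ) ≤ ((10 * n + 1 : ℕ) : ℝ) ^ n := by
    have := (10 * n + 1).descFactorial_le_pow n
    rw [Nat.descFactorial_eq_factorial_mul_choose] at this
    exact_mod_cast this
  have h2 : ((10 * n + 1 : ℕ) : ℝ) ^ n ≤ (11 * (n : ℝ)) ^ n := by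
    apply pow_le_pow_left₀ (by positivity)
    push_cast
    have : (1 : ℝ) ≤ n := by exact_mod_cast hn
    linarith
  have h3 : (11 * (n : ℝ)) ^ n = 11 ^ n * (n : ℝ) ^ n := mul_pow _ _ _
  have h4 := pow_self_le_three_pow_mul_factorial n
  have hf : (0 : ℝ) < n.factorial := by exact_mod_cast n.factorial_pos
  have : (n.factorial : ℝ) * ((10 * n + 1).choose n : ℝ) ≤
      11 ^ n * (3 ^ n * n.factorial) := by
    calc (n.factorial : ℝ) * ((10 * n + 1).choose n : ℝ) ≤ (11 * (n : ℝ)) ^ n :=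
          le_trans h1 h2
      _ = 11 ^ n * (n : ℝ) ^ n := h3
      _ ≤ 11 ^ n * (3 ^ n * n.factorial) := by
          apply mul_le_mul_of_nonneg_left h4 (by positivity)
  have h33 : (11 : ℝ) ^ n * (3 ^ n * n.factorial) = 33 ^ n * n.factorial := by
    rw [← mul_assoc, ← mul_pow]; norm_num
  rw [h33] at this
  have h' : (n.factorial : ℝ) * ((10 * n + 1).choose n : ℝ) ≤ (n.factorial : ℝ) * 33 ^ n := by
    linarith
  exact le_of_mul_le_mul_left h' hf

lemma numeric_bound (n : ℕ) (hn : 1 ≤ n) :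
    n * ∑ k ∈ range (n + 1), (10 * n + 1).choose k < 2 ^ (10 * n + 1) := by
  have hR : (n : ℝ) * ∑ k ∈ range (n + 1), ((10 * n + 1).choose k : ℝ) < 2 ^ (10 * n + 1) := by
    have h1 := sum_choose_le_two_mul n
    have h2 := choose_le_33_pow n hn
    have hn2 : (n : ℝ) ≤ 2 ^ n := by exact_mod_cast (Nat.lt_two_pow_self (n := n)).le
    have hsumnn : (0 : ℝ) ≤ ∑ k ∈ range (n + 1), ((10 * n + 1).choose k : ℝ) := by positivity
    have hnnn : (0 : ℝ) ≤ n := by positivity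
    calc (n : ℝ) * ∑ k ∈ range (n + 1), ((10 * n + 1).choose k : ℝ)
        ≤ (n : ℝ) * (2 * ((10 * n + 1).choose n : ℝ)) := by
          apply mul_le_mul_of_nonneg_left h1 hnnn
      _ ≤ 2 ^ n * (2 * 33 ^ n) := by
          apply mul_le_mul hn2 _ (by positivity) (by positivity)
          apply mul_le_mul_of_nonneg_left h2 (by norm_num)
      _ = 2 * 66 ^ n := by
          rw [show (66 : ℝ) = 2 * 33 by norm_num, mul_pow]; ring
      _ < 2 * 1024 ^ n := by
          have : (66 : ℝ) ^ n < 1024 ^ n := by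
            apply pow_lt_pow_left₀ (by norm_num) (by norm_num) (by omega)
          linarith
      _ = 2 ^ (10 * n + 1) := by
          rw [pow_succ, pow_mul]
          norm_num
          ring
  have := hR
  push_cast at this
  exact_mod_cast this

lemma Shatters.subset' {X : Type*} {C : Set (Set X)} {S S' : Finset X}
    (h : Shatters C S) (hsub : S' ⊆ S) : Shatters C S' := by
  intro T hT
  obtain ⟨c, hc, hcS⟩ := h T (hT.trans hsub)
  refine ⟨c, hc, ?_⟩
  have h1 : (↑S' : Set X) ⊆ ↑S := by exact_mod_cast hsub
  have h2 : (↑T : Set X) ⊆ ↑S' := by exact_mod_cast hT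
  calc c ∩ ↑S' = (c ∩ ↑S) ∩ ↑S' := by
        rw [Set.inter_assoc, Set.inter_eq_self_of_subset_right h1]
    _ = ↑T ∩ ↑S' := by rw [hcS]
    _ = ↑T := Set.inter_eq_self_of_subset_left h2

/-- **VC dimension of the thresholded-Yatracos family.** Each `F_i` has VC dimension at
most `n`, and `F = F_1 ∪ ⋯ ∪ F_n` has VC dimension at most `10n`. -/
theorem vc_thresholded_yatracos {X : Type*} (n : ℕ) (hn : 1 ≤ n)
    (q : Fin n → X → ℝ) :
    (∀ S : Finset X, Shatters (⋃ i, thresholdFam q i) S → S.card ≤ 10 * n) ∧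
      ∀ i, ∀ S : Finset X, Shatters (thresholdFam q i) S → S.card ≤ n := by
  classical
  refine ⟨?_, fun i S hS => card_le_of_shatters_thresholdFam q i S hS⟩
  intro S hS
  by_contra hcard
  push_neg at hcard
  obtain ⟨S', hsub, hcardS'⟩ := Finset.exists_subset_card_eq (show 10 * n + 1 ≤ S.card by omega)
  have hS' : Shatters (⋃ i, thresholdFam q i) S' := hS.subset' hsub
  set 𝒜 : Fin n → Finset (Finset X) :=
    fun i => S'.powerset.filter (fun t => ∃ A ∈ thresholdFam q i, A ∩ ↑S' = (↑t : Set X))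
    with h𝒜
  -- every subset of S' is a trace of some family
  have hcover : S'.powerset ⊆ Finset.univ.biUnion 𝒜 := by
    intro t ht
    rw [mem_powerset] at ht
    obtain ⟨c, hc, hcS⟩ := hS' t ht
    rw [Set.mem_iUnion] at hc
    obtain ⟨i, hci⟩ := hc
    rw [mem_biUnion]
    exact ⟨i, mem_univ i, by rw [h𝒜, mem_filter, mem_powerset]; exact ⟨ht, c, hci, hcS⟩⟩
  -- each trace family is small by Sauer-Shelah (Pajor)
  have hsmall : ∀ i, (𝒜 i).card ≤ ∑ k ∈ range (n + 1), (10 * n + 1).choose k := by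
    intro i
    have hss : (𝒜 i).shatterer ⊆ (range (n + 1)).biUnion (fun k => S'.powersetCard k) := by
      intro t ht
      rw [mem_shatterer] at ht
      have htS' : t ⊆ S' := by
        obtain ⟨u, hu, htu⟩ := ht.exists_superset
        rw [h𝒜, mem_filter, mem_powerset] at hu
        exact htu.trans hu.1
      have hshat : Shatters (thresholdFam q i) t := by
        intro u hu
        obtain ⟨v, hv, htv⟩ := ht hu
        rw [h𝒜, mem_filter] at hv
        obtain ⟨-, A, hA, hAv⟩ := hv
        refine ⟨A, hA, ?_⟩
        have h1 : (↑t : Set X) ⊆ ↑S' := by exact_mod_cast htS'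
        calc A ∩ ↑t = (A ∩ ↑S') ∩ ↑t := by
              rw [Set.inter_assoc, Set.inter_eq_self_of_subset_right h1]
          _ = ↑v ∩ ↑t := by rw [hAv]
          _ = ↑(t ∩ v) := by rw [coe_inter, Set.inter_comm]
          _ = ↑u := by rw [htv]
      have htn : t.card ≤ n := card_le_of_shatters_thresholdFam q i t hshat
      rw [mem_biUnion]
      exact ⟨t.card, mem_range.mpr (by omega), mem_powersetCard.mpr ⟨htS', rfl⟩⟩
    have hbd : ((range (n + 1)).biUnion (fun k => S'.powersetCard k)).card ≤
        ∑ k ∈ range (n + 1), (10 * n + 1).choose k := by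
      refine le_trans (card_biUnion_le) (le_of_eq ?_)
      refine Finset.sum_congr rfl fun k _ => ?_
      rw [card_powersetCard, hcardS']
    exact le_trans (card_le_card_shatterer (𝒜 i)) (le_trans (card_le_card hss) hbd)
  -- counting
  have hcount : 2 ^ (10 * n + 1) ≤ n * ∑ k ∈ range (n + 1), (10 * n + 1).choose k := by
    calc 2 ^ (10 * n + 1) = S'.powerset.card := by rw [card_powerset, hcardS']
      _ ≤ (Finset.univ.biUnion 𝒜).card := card_le_card hcover
      _ ≤ ∑ i : Fin n, (𝒜 i).card := card_biUnion_le
      _ ≤ ∑ _i : Fin n, ∑ k ∈ range (n + 1), (10 * n + 1).choose k :=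
          Finset.sum_le_sum fun i _ => hsmall i
      _ = n * ∑ k ∈ range (n + 1), (10 * n + 1).choose k := by
          rw [Finset.sum_const, card_univ, Fintype.card_fin, smul_eq_mul]
  exact absurd hcount (not_le.mpr (numeric_bound n hn))
end
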